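/- arXiv:1101.0991 — 6 statements merged into one kernel-verified Lean document; each statement's English description precedes it below -/
import Mathlib

section
/- If R is an Artinian hypersurface, then mod R has only trivial extension-closed subcategories; that is, every extension-closed subcategory of mod R equals the zero subcategory, add R, or mod R. -/
universe u

open IsLocalRing

/-- A membership predicate for a strict full subcategory of the category of `R`-modules. -/
def ModulePred (R : Type u) [CommRing R] : Type (u + 1) :=
  ∀ (M : Type u) [AddCommGroup M] [Module R M], Prop

/-- `P` is an extension-closed subcategory of `mod R`: a nonempty strict full subcategory of
the category of finitely generated `R`-modules that is closed under direct summands and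
extensions. -/
def IsExtClosedSubcat (R : Type u) [CommRing R] (P : ModulePred R) : Prop :=
  (∀ (M : Type u) [AddCommGroup M] [Module R M], P M → Module.Finite R M)
  ∧ (∀ (M N : Type u) [AddCommGroup M] [Module R M] [AddCommGroup N] [Module R N],
      Nonempty (M ≃ₗ[R] N) → P M → P N)
  ∧ (∃ (M : Type u) (_ : AddCommGroup M) (_ : Module R M), P M)
  ∧ (∀ (M N : Type u) [AddCommGroup M] [Module R M] [AddCommGroup N] [Module R N],
      P M → (∃ (ι : N →ₗ[R] M) (π : M →ₗ[R] N), π ∘ₗ ι = LinearMap.id) → P N)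
  ∧ (∀ (L M N : Type u) [AddCommGroup L] [Module R L] [AddCommGroup M] [Module R M]
      [AddCommGroup N] [Module R N] (f : L →ₗ[R] M) (g : M →ₗ[R] N),
      Function.Injective f → Function.Surjective g → Function.Exact f g →
      P L → P N → P M)

/-- `P` is the zero subcategory of `mod R`. -/
def IsZeroSubcat (R : Type u) [CommRing R] (P : ModulePred R) : Prop :=
  ∀ (M : Type u) [AddCommGroup M] [Module R M], Module.Finite R M → (P M ↔ Subsingleton M)

/-- `P` is `add R`, the subcategory of finitely generated free `R`-modules. -/
def IsAddRSubcat (R : Type u) [CommRing R] (P : ModulePred R) : Prop :=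
  ∀ (M : Type u) [AddCommGroup M] [Module R M], Module.Finite R M → (P M ↔ Module.Free R M)

/-- `P` is all of `mod R`. -/
def IsModRSubcat (R : Type u) [CommRing R] (P : ModulePred R) : Prop :=
  ∀ (M : Type u) [AddCommGroup M] [Module R M], Module.Finite R M → P M

/-- `mod R` has only trivial extension-closed subcategories. -/
def HasOnlyTrivialExtClosedSubcats (R : Type u) [CommRing R] : Prop :=
  ∀ P : ModulePred R, IsExtClosedSubcat R P →
    IsZeroSubcat R P ∨ IsAddRSubcat R P ∨ IsModRSubcat R P

/-- `mod R` has a nontrivial extension-closed subcategory. -/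
def HasNontrivialExtClosedSubcat (R : Type u) [CommRing R] : Prop :=
  ∃ P : ModulePred R, IsExtClosedSubcat R P ∧
    ¬ IsZeroSubcat R P ∧ ¬ IsAddRSubcat R P ∧ ¬ IsModRSubcat R P

/-- `R` is an Artinian hypersurface: `R ≅ S/(xⁿ)` for a discrete valuation ring `S`
with maximal ideal `(x)` and a positive integer `n`. -/
def IsArtinianHypersurface (R : Type u) [CommRing R] : Prop :=
  ∃ (S : Type u) (_ : CommRing S) (_ : IsDomain S) (_ : IsDiscreteValuationRing S)
    (x : S) (n : ℕ),
    IsLocalRing.maximalIdeal S = Ideal.span {x} ∧ 0 < n ∧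
    Nonempty (R ≃+* S ⧸ Ideal.span {x ^ n})



theorem exists_xi (R : Type u) [CommRing R] [IsLocalRing R]
    (h : ∃ (S : Type u) (_ : CommRing S) (_ : IsDomain S) (_ : IsDiscreteValuationRing S)
      (x : S) (n : ℕ),
      IsLocalRing.maximalIdeal S = Ideal.span {x} ∧ 0 < n ∧
      Nonempty (R ≃+* S ⧸ Ideal.span {x ^ n})) :
    ∃ (ξ : R) (n : ℕ), 0 < n ∧ ξ ^ n = 0 ∧
      (∀ I : Ideal R, ∃ j, j ≤ n ∧ I = Ideal.span {ξ ^ j}) ∧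
      (∀ c d a, c + d ≤ n → ξ ^ c * a ∈ Ideal.span {ξ ^ (c + d)} →
        a ∈ Ideal.span {ξ ^ d}) := by
  obtain ⟨S, _, _, _, x, n, hmax, hn, ⟨e⟩⟩ := h
  have hx0 : x ≠ 0 := by
    rintro rfl
    exact IsDiscreteValuationRing.not_a_field S
      (by rwa [Ideal.span_singleton_eq_bot.mpr rfl] at hmax)
  have hxirr : Irreducible x :=
    IsDiscreteValuationRing.irreducible_of_span_eq_maximalIdeal x hx0 hmax
  set Q := S ⧸ Ideal.span {x ^ n} with hQ
  set mk : S →+* Q := Ideal.Quotient.mk (Ideal.span {x ^ n}) with hmkdef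
  have hmk : ∀ s : S, mk s = 0 ↔ s ∈ Ideal.span {x ^ n} := fun s =>
    Ideal.Quotient.eq_zero_iff_mem
  have hsymm_pow : ∀ j : ℕ, (e.symm (mk x)) ^ j = e.symm (mk (x ^ j)) := fun j => by
    rw [map_pow, map_pow]
  refine ⟨e.symm (mk x), n, hn, ?_, ?_, ?_⟩
  · rw [hsymm_pow, (hmk (x ^ n)).mpr (Ideal.subset_span rfl), map_zero]
  · intro I
    set J : Ideal Q := I.map (e : R →+* Q) with hJ
    set I' : Ideal S := J.comap mk with hI'
    have hxnI' : x ^ n ∈ I' := by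
      simp only [hI', Ideal.mem_comap]
      rw [(hmk (x ^ n)).mpr (Ideal.subset_span rfl)]
      exact J.zero_mem
    have hI'ne : I' ≠ ⊥ := fun hb => by
      rw [hb] at hxnI'
      exact pow_ne_zero n hx0 (by simpa using hxnI')
    obtain ⟨j, hj⟩ := IsDiscreteValuationRing.ideal_eq_span_pow_irreducible hI'ne hxirr
    have hjn : j ≤ n := by
      rw [hj, Ideal.mem_span_singleton] at hxnI'
      exact (pow_dvd_pow_iff hx0 hxirr.not_isUnit).mp hxnI'
    refine ⟨j, hjn, ?_⟩
    have hJI' : J = I'.map mk := by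
      rw [hI', Ideal.map_comap_of_surjective mk Ideal.Quotient.mk_surjective]
    have hJspan : J = Ideal.span {mk (x ^ j)} := by
      rw [hJI', hj, Ideal.map_span]
      simp
    -- I = comap e J
    have hIJ : I = J.comap (e : R →+* Q) :=
      (Ideal.comap_map_of_bijective (e : R →+* Q) e.bijective (I := I)).symm
    rw [hIJ, hJspan]
    ext r
    rw [Ideal.mem_comap, Ideal.mem_span_singleton, Ideal.mem_span_singleton, hsymm_pow]
    constructor
    · rintro ⟨t, ht⟩
      exact ⟨e.symm t, e.injective (by simpa using ht)⟩
    · rintro ⟨t, ht⟩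
      exact ⟨e t, by rw [ht]; simp⟩
  · intro c d a hcd ha
    rw [Ideal.mem_span_singleton] at ha ⊢
    obtain ⟨t, ht⟩ := ha
    -- apply e
    obtain ⟨b, hb⟩ := Ideal.Quotient.mk_surjective (I := Ideal.span {x ^ n}) (e a)
    obtain ⟨u, hu⟩ := Ideal.Quotient.mk_surjective (I := Ideal.span {x ^ n}) (e t)
    have hstep : (mk x) ^ c * e a = (mk x) ^ (c + d) * e t := by
      have h2 := congrArg e ht
      simpa using h2
    have hxy : x ^ c * b - x ^ (c + d) * u ∈ Ideal.span {x ^ n} := by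
      rw [← Ideal.Quotient.eq_zero_iff_mem, map_sub, map_mul, map_mul, map_pow, map_pow]
      show (mk x) ^ c * mk b - (mk x) ^ (c + d) * mk u = 0
      rw [hb, hu, hstep, sub_self]
    rw [Ideal.mem_span_singleton] at hxy
    obtain ⟨v, hv⟩ := hxy
    have key : x ^ c * b = x ^ c * (x ^ d * (u + x ^ (n - c - d) * v)) := by
      have hxn : x ^ n = x ^ c * (x ^ d * x ^ (n - c - d)) := by
        rw [← pow_add, ← pow_add]
        congr 1
        omega
      calc x ^ c * b = x ^ (c + d) * u + (x ^ c * b - x ^ (c + d) * u) := by ring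
        _ = x ^ (c + d) * u + x ^ n * v := by rw [hv]
        _ = x ^ c * (x ^ d * (u + x ^ (n - c - d) * v)) := by
            rw [hxn, pow_add]; ring
    have hbeq : b = x ^ d * (u + x ^ (n - c - d) * v) :=
      mul_left_cancel₀ (pow_ne_zero c hx0) key
    -- transport back
    have hfin : e a = (mk x) ^ d * mk (u + x ^ (n - c - d) * v) := by
      rw [← hb, hbeq, map_mul, map_pow]
    refine ⟨e.symm (mk (u + x ^ (n - c - d) * v)), e.injective ?_⟩
    simpa using hfin

namespace Hyp

variable {R : Type u} [CommRing R]

/-- The cyclic module `R ⧸ (ξ^j)`. -/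
abbrev Cmod (ξ : R) (j : ℕ) : Type u := R ⧸ (Ideal.span {ξ ^ j} : Ideal R)

lemma P_of_subsingleton {P : ModulePred R} (hP : IsExtClosedSubcat R P)
    (M : Type u) [AddCommGroup M] [Module R M] (h : Subsingleton M) : P M := by
  obtain ⟨-, -, ⟨M₀, i₁, i₂, hM₀⟩, hsumm, -⟩ := hP
  exact hsumm M₀ M hM₀ ⟨0, 0, LinearMap.ext fun z => Subsingleton.elim _ _⟩

lemma P_fst {P : ModulePred R} (hP : IsExtClosedSubcat R P)
    (A B : Type u) [AddCommGroup A] [Module R A] [AddCommGroup B] [Module R B]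
    (h : P (A × B)) : P A := by
  obtain ⟨-, -, -, hsumm, -⟩ := hP
  exact hsumm _ A h ⟨LinearMap.inl R A B, LinearMap.fst R A B,
    LinearMap.ext fun z => rfl⟩

lemma P_snd {P : ModulePred R} (hP : IsExtClosedSubcat R P)
    (A B : Type u) [AddCommGroup A] [Module R A] [AddCommGroup B] [Module R B]
    (h : P (A × B)) : P B := by
  obtain ⟨-, -, -, hsumm, -⟩ := hP
  exact hsumm _ B h ⟨LinearMap.inr R A B, LinearMap.snd R A B,
    LinearMap.ext fun z => rfl⟩

/-- Multiplication by `ξ^c` as a map `Cmod ξ j →ₗ Cmod ξ k` for `k ≤ c + j`. -/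
def mulQ (ξ : R) (c j k : ℕ) (h : k ≤ c + j) : Cmod ξ j →ₗ[R] Cmod ξ k :=
  Submodule.mapQ _ _ (LinearMap.lsmul R R (ξ ^ c)) (by
    intro r hr
    simp only [Submodule.mem_comap, LinearMap.lsmul_apply, smul_eq_mul,
      Ideal.submodule_span_eq, Ideal.mem_span_singleton] at hr ⊢
    refine dvd_trans (pow_dvd_pow ξ h) ?_
    rw [pow_add]
    exact mul_dvd_mul_left _ hr)

/-- The projection `Cmod ξ i →ₗ Cmod ξ j` for `j ≤ i`. -/
def projQ (ξ : R) (i j : ℕ) (h : j ≤ i) : Cmod ξ i →ₗ[R] Cmod ξ j :=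
  Submodule.mapQ _ _ LinearMap.id (by
    intro r hr
    simp only [Submodule.mem_comap, LinearMap.id_apply,
      Ideal.submodule_span_eq, Ideal.mem_span_singleton] at hr ⊢
    exact dvd_trans (pow_dvd_pow ξ h) hr)

lemma mulQ_mk (ξ : R) (c j k : ℕ) (h : k ≤ c + j) (r : R) :
    mulQ ξ c j k h (Submodule.Quotient.mk r) = Submodule.Quotient.mk (ξ ^ c * r) :=
  Submodule.mapQ_apply _ _ _ r

lemma projQ_mk (ξ : R) (i j : ℕ) (h : j ≤ i) (r : R) :
    projQ ξ i j h (Submodule.Quotient.mk r) = Submodule.Quotient.mk r :=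
  Submodule.mapQ_apply _ _ _ r


@[simp] lemma mulQ_mk' (ξ : R) (c j k : ℕ) (h : k ≤ c + j) (r : R) :
    mulQ ξ c j k h (Ideal.Quotient.mk (Ideal.span {ξ ^ j}) r)
      = Ideal.Quotient.mk (Ideal.span {ξ ^ k}) (ξ ^ c * r) :=
  mulQ_mk ξ c j k h r

@[simp] lemma projQ_mk' (ξ : R) (i j : ℕ) (h : j ≤ i) (r : R) :
    projQ ξ i j h (Ideal.Quotient.mk (Ideal.span {ξ ^ i}) r)
      = Ideal.Quotient.mk (Ideal.span {ξ ^ j}) r :=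
  projQ_mk ξ i j h r

lemma mk_eq_zero_iff (ξ : R) (j : ℕ) (r : R) :
    (Submodule.Quotient.mk r : Cmod ξ j) = 0 ↔ ξ ^ j ∣ r := by
  rw [Submodule.Quotient.mk_eq_zero]
  exact Ideal.mem_span_singleton

lemma seq_step {P : ModulePred R} (hP : IsExtClosedSubcat R P) (ξ : R) (n : ℕ)
    (hcancel : ∀ c d a, c + d ≤ n → ξ ^ c * a ∈ Ideal.span {ξ ^ (c + d)} →
      a ∈ Ideal.span {ξ ^ d})
    (i c : ℕ) (hc : c ≤ i) (hic : i + c ≤ n) (h : P (Cmod ξ i)) :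
    P (Cmod ξ (i + c)) ∧ P (Cmod ξ (i - c)) := by
  set f : Cmod ξ i →ₗ[R] Cmod ξ (i + c) × Cmod ξ (i - c) :=
    (mulQ ξ c i (i + c) (by omega)).prod (projQ ξ i (i - c) (by omega)) with hf
  set g : (Cmod ξ (i + c) × Cmod ξ (i - c)) →ₗ[R] Cmod ξ i :=
    (projQ ξ (i + c) i (by omega)).comp (LinearMap.fst R _ _)
      - (mulQ ξ c (i - c) i (by omega)).comp (LinearMap.snd R _ _) with hg
  have hpow : ξ ^ c * ξ ^ (i - c) = ξ ^ i := by
    rw [← pow_add]; congr 1; omega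
  have hfinj : Function.Injective f := by
    rw [← LinearMap.ker_eq_bot, eq_bot_iff]
    rintro z hz
    obtain ⟨r, rfl⟩ := Submodule.Quotient.mk_surjective _ z
    have h1 : (Submodule.Quotient.mk (ξ ^ c * r) : Cmod ξ (i + c)) = 0 := by
      have h0 := congrArg Prod.fst (LinearMap.mem_ker.mp hz)
      simpa [hf, mulQ_mk] using h0
    rw [mk_eq_zero_iff] at h1
    have h2 : r ∈ Ideal.span {ξ ^ i} := by
      apply hcancel c i r (by omega)
      rw [Ideal.mem_span_singleton, add_comm c i]
      exact h1
    rw [Submodule.mem_bot, Submodule.Quotient.mk_eq_zero]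
    exact h2
  have hgsurj : Function.Surjective g := by
    intro y
    obtain ⟨u, rfl⟩ := Submodule.Quotient.mk_surjective _ y
    refine ⟨(Submodule.Quotient.mk u, 0), ?_⟩
    simp [hg]
  have hexact : Function.Exact f g := by
    rintro ⟨u', v'⟩
    obtain ⟨u, rfl⟩ := Submodule.Quotient.mk_surjective _ u'
    obtain ⟨v, rfl⟩ := Submodule.Quotient.mk_surjective _ v'
    constructor
    · intro hy
      have h1 : (Submodule.Quotient.mk (u - ξ ^ c * v) : Cmod ξ i) = 0 := by
        simp only [hg, LinearMap.sub_apply, LinearMap.comp_apply, LinearMap.fst_apply,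
          LinearMap.snd_apply, projQ_mk, mulQ_mk] at hy
        rw [Submodule.Quotient.mk_sub]
        exact hy
      rw [mk_eq_zero_iff] at h1
      obtain ⟨s, hs⟩ := h1
      refine ⟨Submodule.Quotient.mk (v + ξ ^ (i - c) * s), ?_⟩
      have key : ξ ^ c * (v + ξ ^ (i - c) * s) = u := by
        have : u - ξ ^ c * v = ξ ^ i * s := hs
        rw [mul_add, ← mul_assoc, hpow]
        linear_combination -this
      refine Prod.ext ?_ ?_
      · show mulQ ξ c i (i + c) _ (Submodule.Quotient.mk (v + ξ ^ (i - c) * s)) = _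
        rw [mulQ_mk, key]
      · show projQ ξ i (i - c) _ (Submodule.Quotient.mk (v + ξ ^ (i - c) * s)) = _
        rw [projQ_mk, Submodule.Quotient.eq]
        refine Ideal.mem_span_singleton.mpr ?_
        simp
    · rintro ⟨z, hz⟩
      obtain ⟨r, rfl⟩ := Submodule.Quotient.mk_surjective _ z
      rw [← hz]
      simp only [hg, hf, LinearMap.sub_apply, LinearMap.comp_apply, LinearMap.fst_apply,
        LinearMap.snd_apply, LinearMap.prod_apply, Pi.prod, Function.prod_apply, projQ_mk', mulQ_mk', mulQ_mk,
        projQ_mk]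
      rw [sub_eq_zero]
  have hprod : P (Cmod ξ (i + c) × Cmod ξ (i - c)) :=
    hP.2.2.2.2 _ _ _ f g hfinj hgsurj hexact h h
  exact ⟨P_fst hP _ _ hprod, P_snd hP _ _ hprod⟩

lemma climb {P : ModulePred R} (hP : IsExtClosedSubcat R P) (ξ : R) (n : ℕ)
    (hcancel : ∀ c d a, c + d ≤ n → ξ ^ c * a ∈ Ideal.span {ξ ^ (c + d)} →
      a ∈ Ideal.span {ξ ^ d}) :
    ∀ (k i : ℕ), 1 ≤ i → i ≤ n → n - i ≤ k → P (Cmod ξ i) → P (Cmod ξ n) := by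
  intro k
  induction k with
  | zero =>
    intro i h1 h2 h3 h
    obtain rfl : i = n := by omega
    exact h
  | succ k ih =>
    intro i h1 h2 h3 h
    by_cases hin : i = n
    · subst hin; exact h
    · set c := min i (n - i) with hcdef
      have h4 : c ≤ i := min_le_left _ _
      have h5 : c ≤ n - i := min_le_right _ _
      have hc1 : 1 ≤ c := le_min h1 (by omega)
      have := (seq_step hP ξ n hcancel i c h4 (by omega) h).1
      exact ih (i + c) (by omega) (by omega) (by omega) this

lemma all_exp {P : ModulePred R} (hP : IsExtClosedSubcat R P) (ξ : R) (n : ℕ)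
    (hcancel : ∀ c d a, c + d ≤ n → ξ ^ c * a ∈ Ideal.span {ξ ^ (c + d)} →
      a ∈ Ideal.span {ξ ^ d})
    (j0 : ℕ) (h1 : 1 ≤ j0) (h2 : j0 < n) (hj0 : P (Cmod ξ j0)) :
    ∀ j, j ≤ n → P (Cmod ξ j) := by
  have up : ∀ d, j0 + d ≤ n → P (Cmod ξ (j0 + d)) := by
    intro d
    induction d with
    | zero => intro _; simpa using hj0
    | succ d ih =>
      intro hd
      exact (seq_step hP ξ n hcancel (j0 + d) 1 (by omega) (by omega) (ih (by omega))).1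
  have down : ∀ d, P (Cmod ξ (j0 - d)) := by
    intro d
    induction d with
    | zero => simpa using hj0
    | succ d ih =>
      by_cases h0 : j0 - d = 0
      · have heq : j0 - (d + 1) = 0 := by omega
        rw [heq]
        rw [h0] at ih
        exact ih
      · have h2' : (j0 - d) + 1 ≤ n := by omega
        have hthis := (seq_step hP ξ n hcancel (j0 - d) 1 (by omega) h2' ih).2
        have heq : j0 - d - 1 = j0 - (d + 1) := by omega
        rw [heq] at hthis
        exact hthis
  intro j hj
  rcases le_or_gt j j0 with hle | hlt
  · have heq : j = j0 - (j0 - j) := by omega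
    rw [heq]
    exact down _
  · have heq : j = j0 + (j - j0) := by omega
    rw [heq]
    exact up _ (by omega)

lemma ann_eq (ξ : R) (n : ℕ)
    (hclass : ∀ I : Ideal R, ∃ j, j ≤ n ∧ I = Ideal.span {ξ ^ j})
    (M : Type u) [AddCommGroup M] [Module R M] (m : M) (i : ℕ) (hi1 : 1 ≤ i)
    (h0 : ξ ^ i • m = 0) (h1 : ξ ^ (i - 1) • m ≠ 0) :
    LinearMap.ker (LinearMap.toSpanSingleton R M m) = Ideal.span {ξ ^ i} := by
  obtain ⟨j, hjn, hEq⟩ := hclass (LinearMap.ker (LinearMap.toSpanSingleton R M m))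
  have hij : i ≤ j := by
    by_contra hlt
    push_neg at hlt
    apply h1
    have : ξ ^ (i - 1) ∈ Ideal.span {ξ ^ j} := by
      rw [Ideal.mem_span_singleton]
      exact pow_dvd_pow ξ (by omega)
    rw [← hEq, LinearMap.mem_ker, LinearMap.toSpanSingleton_apply] at this
    exact this
  apply le_antisymm
  · rw [hEq]
    rw [Ideal.span_singleton_le_span_singleton]
    exact pow_dvd_pow ξ hij
  · rw [Ideal.span_singleton_le_iff_mem, LinearMap.mem_ker, LinearMap.toSpanSingleton_apply]
    exact h0

lemma cyclic_retract (ξ : R) (n : ℕ) (hn : 0 < n) (hnil : ξ ^ n = 0)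
    (hclass : ∀ I : Ideal R, ∃ j, j ≤ n ∧ I = Ideal.span {ξ ^ j})
    (hcancel : ∀ c d a, c + d ≤ n → ξ ^ c * a ∈ Ideal.span {ξ ^ (c + d)} →
      a ∈ Ideal.span {ξ ^ d})
    (M : Type u) [AddCommGroup M] [Module R M] (hM : ¬ Subsingleton M) :
    ∃ i, 1 ≤ i ∧ i ≤ n ∧
      ∃ (ι : Cmod ξ i →ₗ[R] M) (π : M →ₗ[R] Cmod ξ i), π ∘ₗ ι = LinearMap.id := by
  classical
  have hex : ∃ i, ∀ m : M, ξ ^ i • m = 0 := ⟨n, fun m => by rw [hnil, zero_smul]⟩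
  set i := Nat.find hex with hidef
  have hik : ∀ m : M, ξ ^ i • m = 0 := Nat.find_spec hex
  have hin : i ≤ n := Nat.find_le (fun m => by rw [hnil, zero_smul])
  have hi1 : 1 ≤ i := by
    rcases Nat.eq_zero_or_pos i with hz | hpos
    · exfalso
      apply hM
      constructor
      intro a b
      have ha := hik a
      have hb := hik b
      rw [hz, pow_zero, one_smul] at ha hb
      rw [ha, hb]
    · exact hpos
  have hmin : ¬ ∀ m : M, ξ ^ (i - 1) • m = 0 := Nat.find_min hex (by omega)
  push_neg at hmin
  obtain ⟨m, hm⟩ := hmin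
  have hker : LinearMap.ker (LinearMap.toSpanSingleton R M m) = Ideal.span {ξ ^ i} :=
    ann_eq ξ n hclass M m i hi1 (hik m) hm
  refine ⟨i, hi1, hin, ?_⟩
  set I : Ideal R := Ideal.span {ξ ^ i} with hIdef
  have hT : Module.IsTorsionBySet R M I := by
    refine (Module.isTorsionBySet_span_singleton_iff _).mpr ?_
    intro x
    exact hik x
  letI : Module (R ⧸ I) M := hT.module
  haveI : IsScalarTower R (R ⧸ I) M := Module.IsTorsionBySet.isScalarTower hT
  have hBaer : Module.Baer (R ⧸ I) (R ⧸ I) := by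
    intro J g
    by_cases hJbot : J = ⊥
    · refine ⟨0, ?_⟩
      intro x hx
      have hx0 : x = 0 := by
        rw [hJbot] at hx
        simpa using hx
      subst hx0
      have : (⟨0, hx⟩ : J) = 0 := rfl
      rw [this, map_zero]
      simp
    · obtain ⟨j, hjn, hKeq⟩ := hclass (J.comap (Ideal.Quotient.mk I))
      have hJspan : J = Ideal.span {Ideal.Quotient.mk I (ξ ^ j)} := by
        have h2 : J = (J.comap (Ideal.Quotient.mk I)).map (Ideal.Quotient.mk I) :=
          (Ideal.map_comap_of_surjective _ Ideal.Quotient.mk_surjective J).symm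
        rw [h2, hKeq, Ideal.map_span]
        simp
      have hji : j < i := by
        by_contra hge
        push_neg at hge
        apply hJbot
        have hmk0 : Ideal.Quotient.mk I (ξ ^ j) = 0 := by
          rw [Ideal.Quotient.eq_zero_iff_mem, hIdef, Ideal.mem_span_singleton]
          exact pow_dvd_pow ξ hge
        rw [hJspan, hmk0]
        simp
      set w : R ⧸ I := Ideal.Quotient.mk I (ξ ^ j) with hwdef
      have hwJ : w ∈ J := hJspan ▸ Ideal.subset_span rfl
      set a := g ⟨w, hwJ⟩ with hadef
      obtain ⟨α, hα⟩ := Ideal.Quotient.mk_surjective a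
      have hsmul : Ideal.Quotient.mk I (ξ ^ (i - j)) • (⟨w, hwJ⟩ : J) = 0 := by
        have : Ideal.Quotient.mk I (ξ ^ (i - j)) • (⟨w, hwJ⟩ : J)
            = ⟨Ideal.Quotient.mk I (ξ ^ (i - j)) * w, J.mul_mem_left _ hwJ⟩ := rfl
        rw [this]
        apply Subtype.ext
        show Ideal.Quotient.mk I (ξ ^ (i - j)) * w = 0
        rw [hwdef, ← map_mul, ← pow_add]
        have heq : i - j + j = i := by omega
        rw [heq, Ideal.Quotient.eq_zero_iff_mem, hIdef]
        exact Ideal.subset_span rfl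
      have h1 : Ideal.Quotient.mk I (ξ ^ (i - j)) * a = 0 := by
        rw [hadef, ← smul_eq_mul, ← map_smul, hsmul, map_zero]
      have hαmem : α ∈ Ideal.span {ξ ^ j} := by
        apply hcancel (i - j) j α (by omega)
        have heq : i - j + j = i := by omega
        rw [heq, ← hIdef, ← Ideal.Quotient.eq_zero_iff_mem, map_mul, map_pow]
        rw [← map_pow, hα]
        exact h1
      rw [Ideal.mem_span_singleton] at hαmem
      obtain ⟨b, hb⟩ := hαmem
      refine ⟨LinearMap.toSpanSingleton (R ⧸ I) (R ⧸ I) (Ideal.Quotient.mk I b), ?_⟩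
      intro z hz
      obtain ⟨r, hr⟩ := Ideal.mem_span_singleton'.mp (hJspan ▸ hz)
      have hsub : (⟨z, hz⟩ : J) = r • ⟨w, hwJ⟩ := by
        apply Subtype.ext
        show z = r * w
        rw [← hr]
      rw [LinearMap.toSpanSingleton_apply, hsub, map_smul]
      show z • Ideal.Quotient.mk I b = r * a
      rw [← hr, smul_eq_mul, hwdef, mul_assoc, ← map_mul, ← hb, hα]
  set ι' : (R ⧸ I) →ₗ[R ⧸ I] M := LinearMap.toSpanSingleton (R ⧸ I) M m with hι'def
  have hι'inj : Function.Injective ι' := by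
    rw [← LinearMap.ker_eq_bot, eq_bot_iff]
    intro z hz
    obtain ⟨r, rfl⟩ := Ideal.Quotient.mk_surjective z
    have hrm : r • m = 0 := by
      have h2 : Ideal.Quotient.mk I r • m = 0 := by
        simpa [hι'def, LinearMap.toSpanSingleton_apply] using hz
      rwa [Module.IsTorsionBySet.mk_smul hT] at h2
    have hrK : r ∈ I := by
      rw [← hker]
      exact LinearMap.mem_ker.mpr (by rw [LinearMap.toSpanSingleton_apply]; exact hrm)
    simp only [Submodule.mem_bot]
    rw [Ideal.Quotient.eq_zero_iff_mem]
    exact hrK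
  obtain ⟨π', hπ'⟩ := hBaer.extension_property ι' hι'inj LinearMap.id
  refine ⟨ι'.restrictScalars R, π'.restrictScalars R, ?_⟩
  apply LinearMap.ext
  intro z
  exact LinearMap.congr_fun hπ' z

lemma finite_ideals (ξ : R) (n : ℕ)
    (hclass : ∀ I : Ideal R, ∃ j, j ≤ n ∧ I = Ideal.span {ξ ^ j}) :
    Finite (Ideal R) := by
  apply Finite.of_surjective (fun j : Fin (n + 1) => Ideal.span {ξ ^ (j : ℕ)})
  intro I
  obtain ⟨j, hj, hEq⟩ := hclass I
  exact ⟨⟨j, by omega⟩, hEq.symm⟩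

/-- The free module of rank one `Cmod ξ n ≃ R`. -/
def cmodTopEquiv (ξ : R) (n : ℕ) (hnil : ξ ^ n = 0) : Cmod ξ n ≃ₗ[R] R :=
  Submodule.quotEquivOfEqBot _ (by
    rw [hnil]
    exact Submodule.span_zero_singleton R)

lemma small_exponent [Nontrivial R] {P : ModulePred R} (hP : IsExtClosedSubcat R P)
    (ξ : R) (n : ℕ) (hn : 0 < n) (hnil : ξ ^ n = 0)
    (hclass : ∀ I : Ideal R, ∃ j, j ≤ n ∧ I = Ideal.span {ξ ^ j})
    (hcancel : ∀ c d a, c + d ≤ n → ξ ^ c * a ∈ Ideal.span {ξ ^ (c + d)} →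
      a ∈ Ideal.span {ξ ^ d})
    (M : Type u) [AddCommGroup M] [Module R M] [Module.Finite R M]
    (hMP : P M) (hMnf : ¬ Module.Free R M) :
    ∃ j, 1 ≤ j ∧ j < n ∧ P (Cmod ξ j) := by
  haveI : Finite (Submodule R R) := finite_ideals ξ n hclass
  haveI : IsArtinianRing R := Finite.to_wellFoundedLT
  haveI : IsArtinian R M := isArtinian_of_fg_of_artinian'
  have wf : WellFounded ((· < ·) : Submodule R M → Submodule R M → Prop) :=
    (inferInstance : WellFoundedLT (Submodule R M)).wf
  have main : ∀ N : Submodule R M, P ↥N → ¬ Module.Free R ↥N →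
      ∃ j, 1 ≤ j ∧ j < n ∧ P (Cmod ξ j) := by
    intro N
    refine wf.induction
      (C := fun N => P ↥N → ¬ Module.Free R ↥N → ∃ j, 1 ≤ j ∧ j < n ∧ P (Cmod ξ j)) N ?_
    clear N
    intro N ih hNP hNnf
    have hNs : ¬ Subsingleton ↥N := fun h => hNnf inferInstance
    obtain ⟨i, hi1, hin, ι, π, hπι⟩ := cyclic_retract ξ n hn hnil hclass hcancel ↥N hNs
    by_cases hilt : i < n
    · exact ⟨i, hi1, hilt, hP.2.2.2.1 ↥N (Cmod ξ i) hNP ⟨ι, π, hπι⟩⟩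
    have hieq : i = n := by omega
    subst hieq
    have hone : (1 : Cmod ξ i) ≠ 0 := by
      intro h0
      rw [show (1 : Cmod ξ i) = Ideal.Quotient.mk (Ideal.span {ξ ^ i}) (1 : R) from rfl] at h0
      rw [Ideal.Quotient.eq_zero_iff_mem, Ideal.mem_span_singleton] at h0
      obtain ⟨t, ht⟩ := h0
      exact one_ne_zero (by rw [ht, hnil, zero_mul])
    set K : Submodule R ↥N := LinearMap.ker π with hKdef
    have hπcod : ∀ x : ↥N, π (x - ι (π x)) = 0 := by
      intro x
      have := LinearMap.congr_fun hπι (π x)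
      simp only [LinearMap.comp_apply, LinearMap.id_apply] at this
      rw [map_sub, this, sub_self]
    set ρ : ↥N →ₗ[R] ↥K := LinearMap.codRestrict K (LinearMap.id - ι ∘ₗ π)
      (fun x => by
        rw [LinearMap.mem_ker]
        simpa using hπcod x) with hρdef
    have hρK : ∀ k : ↥K, ρ (K.subtype k) = k := by
      intro k
      apply Subtype.ext
      have hk : π (K.subtype k) = 0 := k.2
      show (K.subtype k : ↥N) - ι (π (K.subtype k)) = (k : ↥N)
      rw [hk, map_zero, sub_zero]
      rfl
    have hKP : P ↥K := hP.2.2.2.1 ↥N ↥K hNP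
      ⟨K.subtype, ρ, LinearMap.ext fun k => hρK k⟩
    have hKnf : ¬ Module.Free R ↥K := by
      intro hfree
      apply hNnf
      have E : ↥N ≃ₗ[R] (Cmod ξ i × ↥K) := by
        refine LinearEquiv.ofLinear (π.prod ρ)
          (ι ∘ₗ LinearMap.fst R _ _ + K.subtype ∘ₗ LinearMap.snd R _ _) ?_ ?_
        · apply LinearMap.ext
          rintro ⟨c, k⟩
          have hπι' : π (ι c) = c := LinearMap.congr_fun hπι c
          have hπk : π (k : ↥N) = 0 := k.2
          refine Prod.ext ?_ ?_
          · show π (ι c + K.subtype k) = c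
            rw [map_add, hπι']
            show c + π (K.subtype k) = c
            rw [show π (K.subtype k) = 0 from k.2, add_zero]
          · show ρ (ι c + K.subtype k) = k
            apply Subtype.ext
            show (ι c + K.subtype k) - ι (π (ι c + K.subtype k)) = (k : ↥N)
            rw [map_add, hπι']
            show ι c + K.subtype k - ι (c + π (K.subtype k)) = (k : ↥N)
            have : π (K.subtype k) = 0 := k.2
            rw [this, add_zero]
            abel
        · apply LinearMap.ext
          intro x
          show ι (π x) + K.subtype (ρ x) = x
          show ι (π x) + (x - ι (π x)) = x
          abel
      haveI : Module.Free R (Cmod ξ i) :=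
        Module.Free.of_equiv (cmodTopEquiv ξ i hnil).symm
      haveI hfree' : Module.Free R ↥K := hfree
      exact Module.Free.of_equiv E.symm
    have hKlt : K.map N.subtype < N := by
      apply lt_of_le_of_ne
      · rintro x ⟨y, hy, rfl⟩
        exact y.2
      · intro hEqq
        have hKtop : K = ⊤ := by
          apply Submodule.map_injective_of_injective N.injective_subtype
          rw [hEqq, Submodule.map_top, Submodule.range_subtype]
        have h1 : π (ι 1) = 1 := LinearMap.congr_fun hπι 1
        have hmem : ι 1 ∈ K := by rw [hKtop]; trivial
        rw [LinearMap.mem_ker] at hmem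
        rw [hmem] at h1
        exact hone h1.symm
    have hiso : Nonempty (↥K ≃ₗ[R] ↥(K.map N.subtype)) :=
      ⟨Submodule.equivMapOfInjective N.subtype N.injective_subtype K⟩
    refine ih (K.map N.subtype) hKlt (hP.2.1 _ _ hiso hKP) ?_
    intro hfree
    exact hKnf (Module.Free.of_equiv (Classical.choice hiso).symm)
  have htopiso : Nonempty (M ≃ₗ[R] ↥(⊤ : Submodule R M)) := ⟨Submodule.topEquiv.symm⟩
  refine main ⊤ (hP.2.1 _ _ htopiso hMP) ?_
  intro hfree
  exact hMnf (Module.Free.of_equiv (Submodule.topEquiv : ↥(⊤ : Submodule R M) ≃ₗ[R] M))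

lemma pi_in_P {P : ModulePred R} (hP : IsExtClosedSubcat R P) (hPR : P R) :
    ∀ k : ℕ, P (Fin k → R) := by
  intro k
  induction k with
  | zero => exact P_of_subsingleton hP _ inferInstance
  | succ k ih =>
    refine hP.2.2.2.2 R (Fin (k + 1) → R) (Fin k → R)
      (LinearMap.single R (fun _ : Fin (k + 1) => R) 0)
      (LinearMap.funLeft R R Fin.succ) ?_ ?_ ?_ hPR ih
    · intro a b hab
      have := congrFun hab 0
      simpa using this
    · exact LinearMap.funLeft_surjective_of_injective R R _ (Fin.succ_injective k)
    · intro y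
      constructor
      · intro hy
        refine ⟨y 0, ?_⟩
        funext j
        refine Fin.cases ?_ ?_ j
        · simp
        · intro j'
          have h0 : y (Fin.succ j') = 0 := congrFun hy j'
          simp [Pi.single_eq_of_ne (Fin.succ_ne_zero j'), h0]
      · rintro ⟨r, rfl⟩
        funext j
        simp [LinearMap.funLeft, Pi.single_eq_of_ne (Fin.succ_ne_zero j)]

lemma free_in_P {P : ModulePred R} (hP : IsExtClosedSubcat R P) (hPR : P R)
    (M : Type u) [AddCommGroup M] [Module R M] (hfin : Module.Finite R M)
    (hfree : Module.Free R M) : P M := by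
  haveI := hfin
  haveI := hfree
  haveI : Fintype (Module.Free.ChooseBasisIndex R M) :=
    Module.Free.ChooseBasisIndex.fintype R M
  set ι := Module.Free.ChooseBasisIndex R M
  have e1 : M ≃ₗ[R] (ι → R) := (Module.Free.chooseBasis R M).equivFun
  have e2 : (Fin (Fintype.card ι) → R) ≃ₗ[R] (ι → R) :=
    LinearEquiv.funCongrLeft R R (Fintype.equivFin ι)
  exact hP.2.1 (Fin (Fintype.card ι) → R) M ⟨e2.trans e1.symm⟩
    (pi_in_P hP hPR (Fintype.card ι))

lemma subsingleton_of_span_empty (M : Type u) [AddCommGroup M] [Module R M]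
    (h : Submodule.span R (∅ : Set M) = ⊤) : Subsingleton M := by
  constructor
  intro a b
  have ha : a ∈ (⊥ : Submodule R M) := by
    rw [← Submodule.span_empty (R := R) (M := M), h]; trivial
  have hb : b ∈ (⊥ : Submodule R M) := by
    rw [← Submodule.span_empty (R := R) (M := M), h]; trivial
  rw [Submodule.mem_bot] at ha hb
  rw [ha, hb]

lemma gen_in_P {P : ModulePred R} (hP : IsExtClosedSubcat R P)
    (ξ : R) (n : ℕ)
    (hclass : ∀ I : Ideal R, ∃ j, j ≤ n ∧ I = Ideal.span {ξ ^ j})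
    (hall : ∀ j, j ≤ n → P (Cmod ξ j)) :
    ∀ (t : ℕ) (M : Type u) (i1 : AddCommGroup M) (i2 : Module R M),
      (∃ s : Finset M, s.card ≤ t ∧ Submodule.span R (s : Set M) = ⊤) → P M := by
  intro t
  induction t with
  | zero =>
    rintro M i1 i2 ⟨s, hs, hspan⟩
    have hse : s = ∅ := Finset.card_eq_zero.mp (by omega)
    subst hse
    have : Subsingleton M := subsingleton_of_span_empty M (by simpa using hspan)
    exact P_of_subsingleton hP M this
  | succ t ih =>
    rintro M i1 i2 ⟨s, hs, hspan⟩
    classical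
    by_cases hcard : s.card ≤ t
    · exact ih M i1 i2 ⟨s, hcard, hspan⟩
    · have hne : s.Nonempty := Finset.card_pos.mp (by omega)
      obtain ⟨a, ha⟩ := hne
      set s' := s.erase a with hs'def
      set N : Submodule R M := Submodule.span R (s' : Set M) with hNdef
      have hNP : P ↥N := by
        refine ih ↥N _ _ ⟨s'.attach.image
          (fun x => (⟨x.1, Submodule.subset_span x.2⟩ : ↥N)), ?_, ?_⟩
        · calc (s'.attach.image _).card ≤ s'.attach.card := Finset.card_image_le
            _ = s'.card := Finset.card_attach
            _ ≤ t := by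
                rw [hs'def, Finset.card_erase_of_mem ha]
                omega
        · apply Submodule.map_injective_of_injective N.injective_subtype
          rw [Submodule.map_span, Submodule.map_top, Submodule.range_subtype]
          congr 1
          ext y
          constructor
          · rintro ⟨z, hz, rfl⟩
            simp only [Finset.coe_image, Set.mem_image, Finset.mem_coe,
              Finset.mem_attach] at hz
            obtain ⟨w, -, rfl⟩ := hz
            exact w.2
          · intro hy
            refine ⟨⟨y, Submodule.subset_span hy⟩, ?_, rfl⟩
            simp only [Finset.coe_image, Set.mem_image, Finset.mem_coe]
            exact ⟨⟨y, hy⟩, Finset.mem_attach _ _, rfl⟩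
      -- the quotient is cyclic
      have h1 : Submodule.map N.mkQ (Submodule.span R (s : Set M)) = ⊤ := by
        rw [hspan, Submodule.map_top, Submodule.range_mkQ]
      rw [Submodule.map_span] at h1
      have hcyc : Submodule.span R {N.mkQ a} = (⊤ : Submodule R (M ⧸ N)) := by
        refine le_antisymm le_top ?_
        rw [← h1]
        rw [Submodule.span_le]
        rintro y ⟨x, hx, rfl⟩
        rcases eq_or_ne x a with rfl | hxa
        · exact Submodule.subset_span rfl
        · have hxN : x ∈ N := Submodule.subset_span (Finset.mem_coe.mpr
            (Finset.mem_erase.mpr ⟨hxa, hx⟩))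
          have : N.mkQ x = 0 := by
            rwa [Submodule.mkQ_apply, Submodule.Quotient.mk_eq_zero]
          rw [this]
          exact (Submodule.span R {N.mkQ a}).zero_mem
      set φ := LinearMap.toSpanSingleton R (M ⧸ N) (N.mkQ a) with hφdef
      have hφsurj : Function.Surjective φ := by
        rw [← LinearMap.range_eq_top, ← LinearMap.span_singleton_eq_range]
        exact hcyc
      obtain ⟨j, hjn, hkerEq⟩ := hclass (LinearMap.ker φ)
      have e1 : (R ⧸ LinearMap.ker φ) ≃ₗ[R] (M ⧸ N) :=
        φ.quotKerEquivOfSurjective hφsurj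
      have e2 : Cmod ξ j ≃ₗ[R] (R ⧸ LinearMap.ker φ) :=
        Submodule.quotEquivOfEq _ _ hkerEq.symm
      have hQP : P (M ⧸ N) := hP.2.1 (Cmod ξ j) (M ⧸ N) ⟨e2.trans e1⟩ (hall j hjn)
      exact hP.2.2.2.2 ↥N M (M ⧸ N) N.subtype N.mkQ N.injective_subtype
        N.mkQ_surjective (LinearMap.exact_subtype_mkQ N) hNP hQP

lemma all_in_P {P : ModulePred R} (hP : IsExtClosedSubcat R P)
    (ξ : R) (n : ℕ)
    (hclass : ∀ I : Ideal R, ∃ j, j ≤ n ∧ I = Ideal.span {ξ ^ j})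
    (hall : ∀ j, j ≤ n → P (Cmod ξ j))
    (M : Type u) [AddCommGroup M] [Module R M] (hfin : Module.Finite R M) : P M := by
  obtain ⟨s, hs⟩ := hfin.fg_top
  exact gen_in_P hP ξ n hclass hall s.card M _ _ ⟨s, le_refl _, hs⟩

end Hyp

/-- If `R` is an Artinian hypersurface, then `mod R` has only trivial extension-closed
subcategories. -/
theorem stmt_0 (R : Type u) [CommRing R] [IsNoetherianRing R] [IsLocalRing R]
    (h : IsArtinianHypersurface R) : HasOnlyTrivialExtClosedSubcats R := by
  intro P hP
  obtain ⟨ξ, n, hn, hnil, hclass, hcancel⟩ := exists_xi R h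
  by_cases h1 : ∀ (M : Type u) (i1 : AddCommGroup M) (i2 : Module R M),
      @P M i1 i2 → Subsingleton M
  · left
    intro M i1 i2 _
    exact ⟨h1 M _ _, fun hs => Hyp.P_of_subsingleton hP M hs⟩
  · push_neg at h1
    obtain ⟨M₀, i1, i2, hM₀P, hM₀⟩ := h1
    have hPR : P R := by
      obtain ⟨i, hi1, hin, ι, π, hπι⟩ :=
        Hyp.cyclic_retract ξ n hn hnil hclass hcancel M₀ (not_nontrivial_iff_subsingleton.mpr · hM₀)
      have hPCi : P (Hyp.Cmod ξ i) := hP.2.2.2.1 M₀ _ hM₀P ⟨ι, π, hπι⟩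
      have hPCn : P (Hyp.Cmod ξ n) :=
        Hyp.climb hP ξ n hcancel n i hi1 hin (by omega) hPCi
      exact hP.2.1 (Hyp.Cmod ξ n) R ⟨Hyp.cmodTopEquiv ξ n hnil⟩ hPCn
    by_cases h2 : ∀ (M : Type u) (i1 : AddCommGroup M) (i2 : Module R M),
        @P M i1 i2 → Module.Free R M
    · right; left
      intro M i1 i2 hfin
      exact ⟨h2 M _ _, fun hfree => Hyp.free_in_P hP hPR M hfin hfree⟩
    · right; right
      push_neg at h2
      obtain ⟨M₁, j1, j2, hM₁P, hM₁nf⟩ := h2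
      haveI : Module.Finite R M₁ := hP.1 M₁ hM₁P
      obtain ⟨j0, hj01, hj0n, hPCj0⟩ :=
        Hyp.small_exponent hP ξ n hn hnil hclass hcancel M₁ hM₁P hM₁nf
      have hall : ∀ j, j ≤ n → P (Hyp.Cmod ξ j) :=
        Hyp.all_exp hP ξ n hcancel j0 hj01 hj0n hPCj0
      intro M i1 i2 hfin
      exact Hyp.all_in_P hP ξ n hclass hall M hfin
end

section
/- Let S be a discrete valuation ring with maximal ideal (x), let n be a positive integer, and set R = S/(xⁿ). Then for each integer 1 ≤ i ≤ n−1 there is a short exact sequence of R-modules 0 → R/(xⁱ) → R/(xⁱ⁻¹) ⊕ R/(xⁱ⁺¹) → R/(xⁱ) → 0, where the first map sends the class of a to (class of a, class of ax), the second map sends (class of a, class of b) to the class of ax − b, and x⁰ is interpreted as 1. -/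
universe u

/-- The ring `R = S/(xⁿ)`. -/
abbrev Rq (S : Type u) [CommRing S] (x : S) (n : ℕ) : Type u :=
  S ⧸ Ideal.span {x ^ n}

/-- The class of `x` in `R = S/(xⁿ)`. -/
noncomputable abbrev xq (S : Type u) [CommRing S] (x : S) (n : ℕ) : Rq S x n :=
  Ideal.Quotient.mk _ x

/-- The cyclic `R`-module `R/(xⁱ)`. -/
abbrev Mq (S : Type u) [CommRing S] (x : S) (n i : ℕ) : Type u :=
  Rq S x n ⧸ Ideal.span {xq S x n ^ i}

private lemma aux_mem {S : Type u} [CommRing S] (x : S) {n m : ℕ} (hm : m ≤ n) (s : S) :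
    Ideal.Quotient.mk (Ideal.span {x ^ n}) s ∈
      Ideal.span {(Ideal.Quotient.mk (Ideal.span {x ^ n}) x) ^ m} ↔ x ^ m ∣ s := by
  rw [← map_pow, Ideal.mem_span_singleton]
  constructor
  · rintro ⟨c, hc⟩
    obtain ⟨c, rfl⟩ := Ideal.Quotient.mk_surjective c
    rw [← map_mul] at hc
    have h1 : x ^ n ∣ s - x ^ m * c := by
      rw [← Ideal.mem_span_singleton]
      exact Ideal.Quotient.eq.mp hc
    have h2 : x ^ m ∣ s - x ^ m * c := (pow_dvd_pow x hm).trans h1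
    have := dvd_add h2 (Dvd.intro c rfl)
    simpa using this
  · rintro ⟨c, rfl⟩
    exact ⟨Ideal.Quotient.mk _ c, by rw [map_mul]⟩

set_option maxHeartbeats 2000000 in
/-- Let `S` be a discrete valuation ring with maximal ideal `(x)`, let `n` be a positive
integer and set `R = S/(xⁿ)`.  Then for each `1 ≤ i ≤ n - 1` there is a short exact sequence
of `R`-modules `0 → R/(xⁱ) → R/(xⁱ⁻¹) ⊕ R/(xⁱ⁺¹) → R/(xⁱ) → 0`, where the first map sends
the class of `a` to `(class of a, class of a·x)` and the second map sends `(class of a,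
class of b)` to the class of `a·x − b`. -/
theorem stmt_1 (S : Type u) [CommRing S] [IsDomain S] [IsDiscreteValuationRing S]
    (x : S) (hx : IsLocalRing.maximalIdeal S = Ideal.span {x})
    (n : ℕ) (hn : 0 < n) (i : ℕ) (hi1 : 1 ≤ i) (hi2 : i ≤ n - 1) :
    ∃ (f : Mq S x n i →ₗ[Rq S x n] Mq S x n (i - 1) × Mq S x n (i + 1))
      (g : Mq S x n (i - 1) × Mq S x n (i + 1) →ₗ[Rq S x n] Mq S x n i),
      (∀ a : Rq S x n,
        f (Ideal.Quotient.mk _ a) =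
          (Ideal.Quotient.mk _ a, Ideal.Quotient.mk _ (a * xq S x n))) ∧
      (∀ a b : Rq S x n,
        g (Ideal.Quotient.mk _ a, Ideal.Quotient.mk _ b) =
          Ideal.Quotient.mk _ (a * xq S x n - b)) ∧
      Function.Injective f ∧ Function.Surjective g ∧ Function.Exact f g := by
  have hx0 : x ≠ 0 := by
    intro h
    apply IsDiscreteValuationRing.not_a_field S
    rw [hx, h, Ideal.span_singleton_eq_bot]
  have hin : i + 1 ≤ n := by omega
  have hi' : i - 1 + 1 = i := by omega
  set X : Rq S x n := xq S x n with hX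
  have hpow : X ^ (i - 1) * X = X ^ i := by rw [← pow_succ, hi']
  let f : Mq S x n i →ₗ[Rq S x n] Mq S x n (i - 1) × Mq S x n (i + 1) :=
    Submodule.liftQ _ (LinearMap.prod (Ideal.span {X ^ (i-1)}).mkQ
      ((Ideal.span {X ^ (i+1)}).mkQ ∘ₗ (X • LinearMap.id)))
      (by
        rw [Ideal.span_le, Set.singleton_subset_iff]
        simp only [SetLike.mem_coe, LinearMap.mem_ker, LinearMap.prod_apply, Function.prod_apply,
          Prod.mk_eq_zero]
        constructor
        · show (Ideal.span {X ^ (i-1)}).mkQ (X ^ i) = 0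
          rw [Submodule.mkQ_apply, Submodule.Quotient.mk_eq_zero, Ideal.mem_span_singleton]
          exact pow_dvd_pow X (by omega)
        · show (Ideal.span {X ^ (i+1)}).mkQ (X • X ^ i) = 0
          rw [Submodule.mkQ_apply, Submodule.Quotient.mk_eq_zero, Ideal.mem_span_singleton,
            smul_eq_mul, ← pow_succ']
      )
  let g : Mq S x n (i - 1) × Mq S x n (i + 1) →ₗ[Rq S x n] Mq S x n i :=
    LinearMap.coprod
      (Submodule.liftQ _ ((Ideal.span {X ^ i}).mkQ ∘ₗ (X • LinearMap.id))
        (by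
          rw [Ideal.span_le, Set.singleton_subset_iff]
          show (Ideal.span {X ^ i}).mkQ (X • X ^ (i-1)) = 0
          rw [Submodule.mkQ_apply, Submodule.Quotient.mk_eq_zero, Ideal.mem_span_singleton,
            smul_eq_mul, mul_comm, hpow]))
      (Submodule.liftQ _ (-(Ideal.span {X ^ i}).mkQ)
        (by
          rw [Ideal.span_le, Set.singleton_subset_iff]
          show -((Ideal.span {X ^ i}).mkQ (X ^ (i+1))) = 0
          rw [Submodule.mkQ_apply, neg_eq_zero, Submodule.Quotient.mk_eq_zero,
            Ideal.mem_span_singleton]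
          exact pow_dvd_pow X (by omega)))
  have hf : ∀ a : Rq S x n,
      f (Ideal.Quotient.mk _ a) =
        (Ideal.Quotient.mk _ a, Ideal.Quotient.mk _ (a * X)) := by
    intro a
    show ((Ideal.span {X ^ (i-1)}).mkQ a, (Ideal.span {X ^ (i+1)}).mkQ (X • a)) = _
    rw [smul_eq_mul, mul_comm]
    rfl
  have hg : ∀ a b : Rq S x n,
      g (Ideal.Quotient.mk _ a, Ideal.Quotient.mk _ b) =
        Ideal.Quotient.mk _ (a * X - b) := by
    intro a b
    show (Ideal.span {X ^ i}).mkQ (X • a) + -((Ideal.span {X ^ i}).mkQ b) = _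
    rw [smul_eq_mul, mul_comm, ← map_neg, ← map_add, ← sub_eq_add_neg]
    rfl
  refine ⟨f, g, hf, hg, ?_, ?_, ?_⟩
  · -- injectivity
    rw [← LinearMap.ker_eq_bot, eq_bot_iff]
    rintro z hz
    obtain ⟨a, rfl⟩ := Ideal.Quotient.mk_surjective z
    obtain ⟨s, rfl⟩ := Ideal.Quotient.mk_surjective a
    have hz' := LinearMap.mem_ker.mp hz
    rw [hf] at hz'
    have h2 : Ideal.Quotient.mk (Ideal.span {X ^ (i+1)})
        (Ideal.Quotient.mk (Ideal.span {x ^ n}) s * X) = 0 := by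
      have := (Prod.ext_iff.mp hz').2
      simpa using this
    rw [Ideal.Quotient.eq_zero_iff_mem, hX, ← map_mul] at h2
    have h3 : x ^ (i+1) ∣ s * x := (aux_mem x hin _).mp h2
    have h4 : x ^ i ∣ s := by
      rw [pow_succ] at h3
      exact (mul_dvd_mul_iff_right hx0).mp h3
    rw [Submodule.mem_bot, Ideal.Quotient.eq_zero_iff_mem]
    exact (aux_mem x (by omega) s).mpr h4
  · -- surjectivity
    intro z
    obtain ⟨a, rfl⟩ := Ideal.Quotient.mk_surjective z
    refine ⟨(Ideal.Quotient.mk _ 0, Ideal.Quotient.mk _ (-a)), ?_⟩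
    rw [hg]
    simp
  · -- exactness
    intro y
    constructor
    · intro h0
      obtain ⟨y1, y2⟩ := y
      obtain ⟨a, rfl⟩ := Ideal.Quotient.mk_surjective y1
      obtain ⟨b, rfl⟩ := Ideal.Quotient.mk_surjective y2
      rw [hg, Ideal.Quotient.eq_zero_iff_mem, Ideal.mem_span_singleton] at h0
      obtain ⟨d, hd⟩ := h0
      refine ⟨Ideal.Quotient.mk _ (a - X ^ (i-1) * d), ?_⟩
      rw [hf]
      refine Prod.ext ?_ ?_
      · show Ideal.Quotient.mk _ _ = Ideal.Quotient.mk _ _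
        rw [Ideal.Quotient.eq, Ideal.mem_span_singleton]
        exact ⟨-d, by ring⟩
      · show Ideal.Quotient.mk _ _ = Ideal.Quotient.mk _ _
        congr 1
        linear_combination hd - d * hpow
    · rintro ⟨z, rfl⟩
      obtain ⟨c, rfl⟩ := Ideal.Quotient.mk_surjective z
      rw [hf, hg]
      simp
end

section
/- If mod R has only trivial extension-closed subcategories, then R is an Artinian Gorenstein ring. -/
universe u

open IsLocalRing

section Helpers

variable {R : Type u} [CommRing R]

theorem retraction_of_section {M X Q : Type u} [AddCommGroup M] [Module R M]
    [AddCommGroup X] [Module R X] [AddCommGroup Q] [Module R Q]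
    (ι : M →ₗ[R] X) (π : X →ₗ[R] Q) (hι : Function.Injective ι)
    (hex : Function.Exact ι π) (σ : Q →ₗ[R] X) (hσ : ∀ q, π (σ q) = q) :
    ∃ r : X →ₗ[R] M, r ∘ₗ ι = LinearMap.id := by
  have hker : LinearMap.ker π = LinearMap.range ι := LinearMap.exact_iff.mp hex
  have hmem : ∀ x : X, x - σ (π x) ∈ LinearMap.range ι := by
    intro x
    rw [← hker, LinearMap.mem_ker, map_sub, hσ, sub_self]
  let e := LinearEquiv.ofInjective ι hι
  let p : X →ₗ[R] LinearMap.range ι :=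
    LinearMap.codRestrict (LinearMap.range ι) (LinearMap.id - σ ∘ₗ π) hmem
  refine ⟨e.symm.toLinearMap ∘ₗ p, ?_⟩
  ext m
  have h1 : p (ι m) = e m := by
    apply Subtype.ext
    have h0 : π (ι m) = 0 := hex.apply_apply_eq_zero m
    simp [p, e, h0, LinearEquiv.ofInjective_apply]
  simp [h1, e]

theorem retraction_of_isCompl {M X : Type u} [AddCommGroup M] [Module R M]
    [AddCommGroup X] [Module R X] (ι : M →ₗ[R] X) (hι : Function.Injective ι)
    (W : Submodule R X) (h : IsCompl (LinearMap.range ι) W) :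
    ∃ r : X →ₗ[R] M, r ∘ₗ ι = LinearMap.id := by
  let e := LinearEquiv.ofInjective ι hι
  refine ⟨e.symm.toLinearMap ∘ₗ Submodule.projectionOnto _ W h, ?_⟩
  ext m
  have h1 : Submodule.projectionOnto _ W h (ι m) = e m := by
    simpa [e, LinearEquiv.ofInjective_apply] using
      Submodule.projectionOnto_apply_left h (e m)
  simp [h1, e]

end Helpers
section InjHelpers

variable {R : Type u} [CommRing R]

theorem injective_of_linearEquiv {M N : Type u} [AddCommGroup M] [Module R M]
    [AddCommGroup N] [Module R N] (e : M ≃ₗ[R] N) (hM : Module.Injective R M) :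
    Module.Injective R N where
  out X Y _ _ _ _ f hf g := by
    obtain ⟨h, hh⟩ := hM.out f hf (e.symm.toLinearMap ∘ₗ g)
    exact ⟨e.toLinearMap ∘ₗ h, fun x => by simp [hh x]⟩

theorem injective_of_retract {M N : Type u} [AddCommGroup M] [Module R M]
    [AddCommGroup N] [Module R N] (ι : N →ₗ[R] M) (π : M →ₗ[R] N)
    (hπι : π ∘ₗ ι = LinearMap.id) (hM : Module.Injective R M) : Module.Injective R N where
  out X Y _ _ _ _ f hf g := by
    obtain ⟨h, hh⟩ := hM.out f hf (ι ∘ₗ g)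
    refine ⟨π ∘ₗ h, fun x => ?_⟩
    have h2 := LinearMap.congr_fun hπι (g x)
    simp only [LinearMap.coe_comp, Function.comp_apply, LinearMap.id_coe, id_eq] at h2 ⊢
    rw [hh x]
    exact h2

theorem injective_prod {M N : Type u} [AddCommGroup M] [Module R M]
    [AddCommGroup N] [Module R N] (hM : Module.Injective R M) (hN : Module.Injective R N) :
    Module.Injective R (M × N) where
  out X Y _ _ _ _ f hf g := by
    obtain ⟨h1, hh1⟩ := hM.out f hf (LinearMap.fst R M N ∘ₗ g)
    obtain ⟨h2, hh2⟩ := hN.out f hf (LinearMap.snd R M N ∘ₗ g)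
    refine ⟨h1.prod h2, fun x => ?_⟩
    have e1 := hh1 x
    have e2 := hh2 x
    simp only [LinearMap.coe_comp, Function.comp_apply, LinearMap.fst_apply,
      LinearMap.snd_apply] at e1 e2
    rw [LinearMap.prod_apply]
    exact Prod.ext e1 e2

theorem injective_punit : Module.Injective R PUnit.{u+1} where
  out X Y _ _ _ _ f hf g := ⟨0, fun _ => Subsingleton.elim _ _⟩

theorem injective_of_extension {L M N : Type u} [AddCommGroup L] [Module R L]
    [AddCommGroup M] [Module R M] [AddCommGroup N] [Module R N]
    (f : L →ₗ[R] M) (g : M →ₗ[R] N) (hf : Function.Injective f) (hg : Function.Surjective g)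
    (hex : Function.Exact f g) (hL : Module.Injective R L) (hN : Module.Injective R N) :
    Module.Injective R M := by
  obtain ⟨r, hr⟩ := hL.out f hf LinearMap.id
  simp only [LinearMap.id_coe, id_eq] at hr
  let φ : M →ₗ[R] L × N := r.prod g
  have hbij : Function.Bijective φ := by
    constructor
    · intro a b hab
      have h1 : r a = r b := congrArg Prod.fst hab
      have h2 : g a = g b := congrArg Prod.snd hab
      obtain ⟨l, hl⟩ := (hex (a - b)).mp (by rw [map_sub, h2, sub_self])
      have hl0 : l = 0 := by
        have h3 := congrArg r hl
        rw [hr] at h3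
        rw [h3, map_sub, h1, sub_self]
      have : a - b = 0 := by rw [← hl, hl0, map_zero]
      exact sub_eq_zero.mp this
    · intro p
      obtain ⟨m, hm⟩ := hg p.2
      refine ⟨m + f (p.1 - r m), ?_⟩
      have hz : g (f (p.1 - r m)) = 0 := hex.apply_apply_eq_zero _
      apply Prod.ext
      · show r (m + f (p.1 - r m)) = p.1
        rw [map_add, hr, add_sub_cancel]
      · show g (m + f (p.1 - r m)) = p.2
        rw [map_add, hz, add_zero, hm]
  exact injective_of_linearEquiv (LinearEquiv.ofBijective φ hbij).symm (injective_prod hL hN)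

end InjHelpers
open IsLocalRing

section LocalHelpers

variable {R : Type u} [CommRing R] [IsLocalRing R]

theorem residue_smul_zero {a : R} (ha : a ∈ maximalIdeal R)
    (x : R ⧸ (maximalIdeal R : Submodule R R)) : a • x = 0 := by
  obtain ⟨b, rfl⟩ := Submodule.Quotient.mk_surjective _ x
  rw [← Submodule.Quotient.mk_smul, Submodule.Quotient.mk_eq_zero]
  exact Ideal.mul_mem_right b _ ha

instance residue_simple : IsSimpleModule R (R ⧸ (maximalIdeal R : Submodule R R)) :=
  isSimpleModule_iff_isCoatom.mpr (IsLocalRing.maximalIdeal.isMaximal R).out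

theorem isArtinian_of_isSimpleModule (S : Type u) [AddCommGroup S] [Module R S]
    [IsSimpleModule R S] : IsArtinian R S := by
  constructor
  have hb : Acc (· < ·) (⊥ : Submodule R S) := ⟨_, fun b hb => absurd hb (by simp)⟩
  constructor
  intro a
  rcases eq_bot_or_eq_top a with rfl | rfl
  · exact hb
  · refine ⟨_, fun b hbt => ?_⟩
    rcases eq_bot_or_eq_top b with rfl | rfl
    · exact hb
    · exact absurd hbt (lt_irrefl _)

theorem simple_equiv_residue (S : Type u) [AddCommGroup S] [Module R S] [IsSimpleModule R S] :
    Nonempty (S ≃ₗ[R] R ⧸ (maximalIdeal R : Submodule R R)) := by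
  have hnt : Nontrivial S := IsSimpleModule.nontrivial R S
  obtain ⟨x, hx⟩ := exists_ne (0 : S)
  let τ := LinearMap.toSpanSingleton R S x
  have hsurj : Function.Surjective τ := by
    rw [← LinearMap.range_eq_top, ← LinearMap.span_singleton_eq_range]
    rcases eq_bot_or_eq_top (R ∙ x) with hbot | htop
    · exact absurd (Submodule.span_singleton_eq_bot.mp hbot) hx
    · exact htop
  let e1 := τ.quotKerEquivOfSurjective hsurj
  haveI : IsSimpleModule R (R ⧸ LinearMap.ker τ) := IsSimpleModule.congr e1
  have hmax : Ideal.IsMaximal (LinearMap.ker τ) := ⟨isSimpleModule_iff_isCoatom.mp this⟩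
  have heq : LinearMap.ker τ = (maximalIdeal R : Ideal R) := IsLocalRing.eq_maximalIdeal hmax
  exact ⟨e1.symm.trans (Submodule.quotEquivOfEq _ _ heq)⟩

theorem exists_atom_submodule (Z : Type u) [AddCommGroup Z] [Module R Z] [IsArtinian R Z]
    [Nontrivial Z] : ∃ A : Submodule R Z, IsAtom A := by
  haveI : IsAtomic (Submodule R Z) :=
    isAtomic_of_orderBot_wellFounded_lt (IsWellFounded.wf)
  have htop : (⊤ : Submodule R Z) ≠ ⊥ := by
    intro hh
    obtain ⟨x, hx⟩ := exists_ne (0 : Z)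
    have : x ∈ (⊤ : Submodule R Z) := trivial
    rw [hh, Submodule.mem_bot] at this
    exact hx this
  rcases (eq_bot_or_exists_atom_le (⊤ : Submodule R Z)) with hh | ⟨A, hA, _⟩
  · exact absurd hh htop
  · exact ⟨A, hA⟩

/-- The socle of a module over a local ring. -/
def socle (R : Type u) [CommRing R] [IsLocalRing R] (W : Type u) [AddCommGroup W] [Module R W] : Submodule R W where
  carrier := {x | ∀ a ∈ maximalIdeal R, a • x = 0}
  add_mem' := by
    intro x y hx hy a ha
    rw [smul_add, hx a ha, hy a ha, add_zero]
  zero_mem' := fun a _ => smul_zero a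
  smul_mem' := by
    intro c x hx a ha
    rw [smul_comm, hx a ha, smul_zero]

theorem mem_socle {W : Type u} [AddCommGroup W] [Module R W] (x : W) :
    x ∈ socle R W ↔ ∀ a ∈ maximalIdeal R, a • x = 0 := Iff.rfl

end LocalHelpers

section SplitAll

variable {R : Type u} [CommRing R] [IsLocalRing R]

/-- Every extension of the residue field by `M` splits. -/
def SplitAllK (R : Type u) [CommRing R] [IsLocalRing R] (M : Type u) [AddCommGroup M]
    [Module R M] : Prop :=
  ∀ (X : Type u) (_ : AddCommGroup X) (_ : Module R X) (ι : M →ₗ[R] X)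
    (π : X →ₗ[R] R ⧸ (maximalIdeal R : Submodule R R)),
    Function.Injective ι → Function.Surjective π → Function.Exact ι π →
    ∃ r : X →ₗ[R] M, r ∘ₗ ι = LinearMap.id

theorem retract_of_splitAllK [IsNoetherianRing R] [IsArtinianRing R]
    {M : Type u} [AddCommGroup M] [Module R M]
    (hM : SplitAllK R M) (X : Type u) [AddCommGroup X] [Module R X] [Module.Finite R X]
    (ι : M →ₗ[R] X) (hι : Function.Injective ι) :
    ∃ r : X →ₗ[R] M, r ∘ₗ ι = LinearMap.id := by
  obtain ⟨W, hWmem, hWmax⟩ := set_has_maximal_iff_noetherian.mpr inferInstance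
      {W : Submodule R X | W ⊓ LinearMap.range ι = ⊥} ⟨⊥, by simp⟩
  simp only [Set.mem_setOf_eq] at hWmem
  by_cases htop : W ⊔ LinearMap.range ι = ⊤
  · exact retraction_of_isCompl ι hι W
      ⟨disjoint_iff.mpr (by rwa [inf_comm] at hWmem), codisjoint_iff.mpr (by rwa [sup_comm] at htop)⟩
  exfalso
  let Y := X ⧸ W
  let φ : X →ₗ[R] Y := W.mkQ
  have hφs : Function.Surjective φ := Submodule.Quotient.mk_surjective W
  let ιY : M →ₗ[R] Y := φ ∘ₗ ι
  have hιY : Function.Injective ιY := by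
    intro a b hab
    have hmem : ι a - ι b ∈ W := by
      rw [← Submodule.Quotient.eq]
      exact hab
    have : ι a - ι b ∈ W ⊓ LinearMap.range ι := ⟨hmem, by
      rw [← map_sub]; exact ⟨a - b, rfl⟩⟩
    rw [hWmem, Submodule.mem_bot, sub_eq_zero] at this
    exact hι this
  have hMYne : LinearMap.range ιY ≠ ⊤ := by
    intro hcon
    apply htop
    rw [eq_top_iff]
    intro x _
    have : φ x ∈ LinearMap.range ιY := hcon ▸ Submodule.mem_top
    obtain ⟨m, hm⟩ := this
    have hmem : x - ι m ∈ W := by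
      rw [← Submodule.Quotient.eq]
      exact hm.symm
    have : x = (x - ι m) + ι m := by abel
    rw [this]
    exact Submodule.add_mem_sup hmem ⟨m, rfl⟩
  let Z := Y ⧸ LinearMap.range ιY
  haveI : Nontrivial Z :=
    Submodule.Quotient.nontrivial_iff.mpr <| LT.lt.ne <| (lt_top_iff_ne_top.mpr hMYne)
  haveI : IsArtinian R X := inferInstance
  haveI : IsArtinian R Y := inferInstance
  haveI : IsArtinian R Z := inferInstance
  obtain ⟨A, hA⟩ := exists_atom_submodule (R := R) Z
  haveI : IsSimpleModule R A := isSimpleModule_iff_isAtom.mpr hA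
  obtain ⟨ψ⟩ := simple_equiv_residue (R := R) (↥A)
  let ρ : Y →ₗ[R] Z := (LinearMap.range ιY).mkQ
  let X' : Submodule R Y := A.comap ρ
  have hle : LinearMap.range ιY ≤ X' := by
    intro y hy
    have : ρ y = 0 := by
      rw [← LinearMap.mem_ker, Submodule.ker_mkQ]
      exact hy
    simp only [X', Submodule.mem_comap, this]
    exact A.zero_mem
  let ι' : M →ₗ[R] X' := ιY.codRestrict X' (fun m => hle ⟨m, rfl⟩)
  have hι' : Function.Injective ι' := fun a b hab => hιY (congrArg Subtype.val hab)
  let π0 : X' →ₗ[R] A := (ρ ∘ₗ X'.subtype).codRestrict A (fun x' => x'.2)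
  let π' : X' →ₗ[R] R ⧸ (maximalIdeal R : Submodule R R) := ψ.toLinearMap ∘ₗ π0
  have hπ's : Function.Surjective π' := by
    intro κ
    obtain ⟨yv, hyv⟩ := (LinearMap.range ιY).mkQ_surjective (ψ.symm κ : Z)
    have hymem : yv ∈ X' := by
      simp only [X', Submodule.mem_comap]
      show ρ yv ∈ A
      rw [show ρ yv = ((ψ.symm κ : A) : Z) from hyv]
      exact (ψ.symm κ).2
    refine ⟨⟨yv, hymem⟩, ?_⟩
    show ψ (π0 ⟨yv, hymem⟩) = κ
    have : π0 ⟨yv, hymem⟩ = ψ.symm κ := Subtype.ext (by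
      show ρ yv = ((ψ.symm κ : A) : Z)
      exact hyv)
    rw [this, LinearEquiv.apply_symm_apply]
  have hexact : Function.Exact ι' π' := by
    intro x'
    constructor
    · intro h0
      have hπ0 : π0 x' = 0 := by
        rw [← LinearEquiv.map_eq_zero_iff ψ]
        exact h0
      have hρ : ρ (x' : Y) = 0 := congrArg Subtype.val hπ0
      rw [← LinearMap.mem_ker, Submodule.ker_mkQ] at hρ
      obtain ⟨m, hm⟩ := hρ
      exact ⟨m, Subtype.ext hm⟩
    · rintro ⟨m, rfl⟩
      show ψ.toLinearMap (π0 (ι' m)) = 0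
      have : π0 (ι' m) = 0 := Subtype.ext (by
        show ρ (ιY m) = 0
        rw [← LinearMap.mem_ker, Submodule.ker_mkQ]
        exact ⟨m, rfl⟩)
      rw [this]
      exact map_zero ψ.toLinearMap
  obtain ⟨r', hr'⟩ := hM X' _ _ ι' π' hι' hπ's hexact
  have hrange' : LinearMap.range ι' ≠ ⊤ := by
    intro hcon
    apply hA.1
    rw [eq_bot_iff]
    intro a ha
    obtain ⟨y, hy⟩ := (LinearMap.range ιY).mkQ_surjective a
    have hymem : y ∈ X' := by
      simp only [X', Submodule.mem_comap]
      rw [show ρ y = a from hy]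
      exact ha
    have : (⟨y, hymem⟩ : X') ∈ LinearMap.range ι' := hcon ▸ Submodule.mem_top
    obtain ⟨m, hm⟩ := this
    have h1 : ιY m = y := congrArg Subtype.val hm
    have h2 : ρ y = 0 := by
      rw [← h1, ← LinearMap.mem_ker, Submodule.ker_mkQ]
      exact ⟨m, rfl⟩
    rw [Submodule.mem_bot, ← hy, h2]
  obtain ⟨x', hx'ne⟩ : ∃ x' : X', x' ∉ LinearMap.range ι' := by
    by_contra hall
    push_neg at hall
    exact hrange' (eq_top_iff.mpr fun z _ => hall z)
  set ξ : ↥X' := x' - ι' (r' x') with hξdef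
  have hξK : r' ξ = 0 := by
    have h3 := LinearMap.congr_fun hr' (r' x')
    simp only [LinearMap.coe_comp, Function.comp_apply, LinearMap.id_coe, id_eq] at h3
    rw [hξdef, map_sub, h3, sub_self]
  have hξne : ξ ≠ 0 := by
    intro h0
    apply hx'ne
    exact ⟨r' x', (sub_eq_zero.mp (hξdef ▸ h0)).symm⟩
  obtain ⟨x, hx⟩ := hφs (ξ : Y)
  let K' : Submodule R Y := Submodule.map X'.subtype (LinearMap.ker r')
  let W' : Submodule R X := Submodule.comap φ K'
  have hWW' : W ≤ W' := by
    intro w hw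
    have hw0 : φ w = 0 := by rw [← LinearMap.mem_ker, Submodule.ker_mkQ]; exact hw
    simp only [W', Submodule.mem_comap, hw0]
    exact K'.zero_mem
  have hW'mem : W' ⊓ LinearMap.range ι = ⊥ := by
    rw [eq_bot_iff]
    rintro v ⟨hvW', m, rfl⟩
    have h1 : ιY m ∈ K' := hvW'
    obtain ⟨κ, hκker, hκval⟩ := h1
    have hκ : κ = ι' m := Subtype.ext (by exact hκval)
    rw [hκ] at hκker
    have hκ0 : r' (ι' m) = 0 := hκker
    have hm0 : m = 0 := by
      have h4 := LinearMap.congr_fun hr' m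
      simp only [LinearMap.coe_comp, Function.comp_apply, LinearMap.id_coe, id_eq] at h4
      rw [← h4, hκ0]
    rw [Submodule.mem_bot, hm0, map_zero]
  have hxW' : x ∈ W' := by
    simp only [W', Submodule.mem_comap]
    rw [hx]
    exact ⟨ξ, hξK, rfl⟩
  have hxnW : x ∉ W := by
    intro hxw
    apply hξne
    have h5 : φ x = 0 := by rw [← LinearMap.mem_ker, Submodule.ker_mkQ]; exact hxw
    rw [hx] at h5
    exact Subtype.ext h5
  exact hWmax W' hW'mem (lt_of_le_of_ne hWW' (fun he => hxnW (he ▸ hxW')))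

theorem injective_of_retracts [IsNoetherianRing R] {M : Type u} [AddCommGroup M] [Module R M]
    [Module.Finite R M]
    (hret : ∀ (X : Type u) (_ : AddCommGroup X) (_ : Module R X), Module.Finite R X →
      ∀ (ι : M →ₗ[R] X), Function.Injective ι → ∃ r : X →ₗ[R] M, r ∘ₗ ι = LinearMap.id) :
    Module.Injective R M := by
  apply Module.Baer.injective
  intro I g
  let T : Submodule R (R × M) := LinearMap.range (LinearMap.prod I.subtype (-g))
  let X := (R × M) ⧸ T
  haveI : Module.Finite R X :=
    Module.Finite.of_surjective T.mkQ (Submodule.Quotient.mk_surjective T)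
  let ιX : M →ₗ[R] X := T.mkQ ∘ₗ LinearMap.inr R R M
  have hιX : Function.Injective ιX := by
    intro a b hab
    have hmem : ((0 : R), a - b) ∈ T := by
      have h6 : ((0 : R), a) - ((0 : R), b) ∈ T := (Submodule.Quotient.eq T).mp hab
      simpa using h6
    obtain ⟨i, hi⟩ := hmem
    have hi1 : (i : R) = 0 := congrArg Prod.fst hi
    have hi0 : i = 0 := Subtype.ext hi1
    have hi2 : -g i = a - b := congrArg Prod.snd hi
    rw [hi0, map_zero, neg_zero] at hi2
    exact sub_eq_zero.mp hi2.symm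
  obtain ⟨r, hr⟩ := hret X _ _ inferInstance ιX hιX
  refine ⟨r ∘ₗ (T.mkQ ∘ₗ LinearMap.inl R R M), fun x hx => ?_⟩
  have key : T.mkQ (x, 0) = T.mkQ (0, g ⟨x, hx⟩) :=
    (Submodule.Quotient.eq T).mpr ⟨⟨x, hx⟩, by ext <;> simp⟩
  show r (T.mkQ (x, 0)) = g ⟨x, hx⟩
  rw [key]
  have h7 := LinearMap.congr_fun hr (g ⟨x, hx⟩)
  exact h7

theorem injective_of_splitAllK [IsNoetherianRing R] [IsArtinianRing R]
    {M : Type u} [AddCommGroup M] [Module R M] [Module.Finite R M]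
    (hM : SplitAllK R M) : Module.Injective R M :=
  injective_of_retracts (fun X _ _ hfin ι hι => by
    haveI := hfin
    exact retract_of_splitAllK hM X ι hι)

end SplitAll

section SocleNoeth

variable {R : Type u} [CommRing R] [IsLocalRing R]

theorem isNoetherian_of_socle_noetherian [IsNoetherianRing R] {n : ℕ}
    (hn : (maximalIdeal R) ^ n = ⊥) (W : Type u) [AddCommGroup W] [Module R W]
    (hsoc : IsNoetherian R ↥(socle R W)) : IsNoetherian R W := by
  let S : ℕ → Submodule R W := fun i =>
    { carrier := {x | ∀ a ∈ (maximalIdeal R) ^ i, a • x = 0}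
      add_mem' := by intro x y hx hy a ha; rw [smul_add, hx a ha, hy a ha, add_zero]
      zero_mem' := fun a _ => smul_zero a
      smul_mem' := by intro c x hx a ha; rw [smul_comm, hx a ha, smul_zero] }
  have hmem : ∀ (i : ℕ) (x : W), x ∈ S i ↔ ∀ a ∈ (maximalIdeal R) ^ i, a • x = 0 :=
    fun i x => Iff.rfl
  have key : ∀ i, IsNoetherian R ↥(S i) := by
    intro i
    induction i with
    | zero =>
      have hbot : S 0 = ⊥ := by
        rw [eq_bot_iff]
        intro x hx
        have h1 : (1 : R) ∈ (maximalIdeal R) ^ 0 := by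
          rw [pow_zero, Ideal.one_eq_top]; trivial
        have h2 := (hmem 0 x).mp hx 1 h1
        rw [one_smul] at h2
        simpa [Submodule.mem_bot] using h2
      rw [hbot]
      haveI : Finite ↥(⊥ : Submodule R W) := Finite.of_subsingleton
      infer_instance
    | succ i ih =>
      obtain ⟨s, hs⟩ := IsNoetherian.noetherian ((maximalIdeal R) ^ i : Ideal R)
      have hcomp : ∀ a : R, a ∈ (maximalIdeal R) ^ i → ∀ x : ↥(S (i + 1)),
          (a • (x : W)) ∈ socle R W := by
        intro a ha x b hb
        have hba : b * a ∈ (maximalIdeal R) ^ (i + 1) := by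
          rw [pow_succ, mul_comm b a]
          exact Ideal.mul_mem_mul ha hb
        rw [smul_smul]
        exact x.2 (b * a) hba
      let c : ∀ _ : ↥(s : Finset R), ↥(S (i + 1)) →ₗ[R] ↥(socle R W) := fun a =>
        LinearMap.codRestrict (socle R W) ((a : R) • (S (i + 1)).subtype)
          (fun x => hcomp a (hs ▸ Submodule.subset_span a.2) x)
      let Ψ : ↥(S (i + 1)) →ₗ[R] (↥(s : Finset R) → ↥(socle R W)) := LinearMap.pi c
      have hker : ∀ z : ↥(S (i + 1)), Ψ z = 0 → (z : W) ∈ S i := by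
        intro z hz
        intro a ha
        rw [← hs] at ha
        refine Submodule.span_induction (p := fun a _ => a • (z : W) = 0)
          ?_ ?_ ?_ ?_ ha
        · intro b hb
          have h3 := congrFun hz ⟨b, hb⟩
          have h4 : b • (z : W) = 0 := congrArg Subtype.val h3
          exact h4
        · show (0 : R) • (z : W) = 0
          rw [zero_smul]
        · intro x y _ _ hx hy
          show (x + y) • (z : W) = 0
          rw [add_smul, hx, hy, add_zero]
        · intro r x _ hx
          show (r • x) • (z : W) = 0
          rw [smul_eq_mul, mul_smul, hx, smul_zero]
      let θ : ↥(LinearMap.ker Ψ) →ₗ[R] ↥(S i) :=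
        { toFun := fun z => ⟨((z : ↥(S (i + 1))) : W), hker z.1 (LinearMap.mem_ker.mp z.2)⟩
          map_add' := fun _ _ => Subtype.ext rfl
          map_smul' := fun _ _ => Subtype.ext rfl }
      have hθinj : Function.Injective θ := by
        intro a b hab
        have h5 : ((θ a : ↥(S i)) : W) = ((θ b : ↥(S i)) : W) := congrArg Subtype.val hab
        have h6 : ((a : ↥(S (i + 1))) : W) = ((b : ↥(S (i + 1))) : W) := h5
        exact Subtype.ext (Subtype.ext h6)
      haveI hkerN : IsNoetherian R ↥(LinearMap.ker Ψ) := isNoetherian_of_injective θ hθinj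
      haveI : IsNoetherian R (↥(s : Finset R) → ↥(socle R W)) := isNoetherian_pi
      exact isNoetherian_of_range_eq_ker (LinearMap.ker Ψ).subtype Ψ
        (by rw [Submodule.range_subtype])
  have htop : S n = ⊤ := by
    rw [eq_top_iff]
    intro x _
    intro a ha
    rw [hn, Submodule.mem_bot] at ha
    rw [ha, zero_smul]
  have h6 := key n
  rw [htop] at h6
  exact isNoetherian_of_linearEquiv (Submodule.topEquiv)

end SocleNoeth

section StepLemma

variable {R : Type u} [CommRing R] [IsLocalRing R]

theorem step_exists [IsNoetherianRing R] [IsArtinianRing R]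
    (hz : ∀ (M : Type u) (_ : AddCommGroup M) (_ : Module R M),
      Module.Finite R M → Module.Injective R M → Subsingleton M)
    {E : Type u} [AddCommGroup E] [Module R E] (hE : Module.Injective R E)
    (k₀ : Submodule R E) (hk₀ : k₀ ≠ ⊥)
    (N : Submodule R E) (hNfg : N.FG) (hsoc : N ⊓ socle R E = k₀) :
    ∃ N' : Submodule R E, N < N' ∧ N'.FG ∧ N' ⊓ socle R E = k₀ := by
  haveI hNfin : Module.Finite R ↥N := Module.Finite.iff_fg.mpr hNfg
  have hk₀N : k₀ ≤ N := by rw [← hsoc]; exact inf_le_left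
  have hk₀soc : k₀ ≤ socle R E := by rw [← hsoc]; exact inf_le_right
  obtain ⟨x0, hx0k, hx0ne⟩ := (Submodule.ne_bot_iff k₀).mp hk₀
  haveI : Nontrivial ↥N := ⟨⟨⟨x0, hk₀N hx0k⟩, 0, fun hc => hx0ne (congrArg Subtype.val hc)⟩⟩
  have hNinj : ¬Module.Injective R ↥N := by
    intro hinj
    haveI := hz ↥N _ _ inferInstance hinj
    exact false_of_nontrivial_of_subsingleton ↥N
  have hnsp : ¬SplitAllK R ↥N := fun hsp => hNinj (injective_of_splitAllK hsp)
  rw [SplitAllK] at hnsp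
  push_neg at hnsp
  obtain ⟨X, iX1, iX2, ι, π, hι, hπ, hex, hnr⟩ := hnsp
  letI : AddCommGroup X := iX1
  letI : Module R X := iX2
  haveI hNnoe : IsNoetherian R ↥N := isNoetherian_of_isNoetherianRing_of_finite R ↥N
  haveI : IsNoetherian R X :=
    isNoetherian_of_range_eq_ker ι π ((LinearMap.exact_iff.mp hex).symm)
  haveI hXfin : Module.Finite R X := Module.finite_def.mpr (IsNoetherian.noetherian ⊤)
  obtain ⟨w, hw⟩ := hE.out ι hι N.subtype
  set N' : Submodule R E := LinearMap.range w with hN'def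
  have hNmem : ∀ m : ↥N, w (ι m) = (m : E) := hw
  have hNleN' : N ≤ N' := by
    intro y hy
    exact ⟨ι ⟨y, hy⟩, hNmem ⟨y, hy⟩⟩
  have hwrange : ¬(LinearMap.range w ≤ N) := by
    intro hle
    refine hnr (LinearMap.codRestrict N w (fun x => hle ⟨x, rfl⟩)) ?_
    ext m
    exact hNmem m
  have hNneN' : N ≠ N' := fun he => hwrange (le_of_eq he.symm)
  have hbetween : ∀ P : Submodule R E, N ≤ P → P ≤ N' → P = N ∨ P = N' := by
    intro P hNP hPN'
    rcases eq_bot_or_eq_top (Submodule.map π (Submodule.comap w P)) with hJ | hJ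
    · left
      apply le_antisymm ?_ hNP
      intro y hy
      obtain ⟨x, hxw⟩ := hPN' hy
      have hxP : x ∈ Submodule.comap w P := by
        simp only [Submodule.mem_comap, hxw]
        exact hy
      have hπx : π x = 0 := by
        have hmem2 : π x ∈ Submodule.map π (Submodule.comap w P) := ⟨x, hxP, rfl⟩
        rw [hJ, Submodule.mem_bot] at hmem2
        exact hmem2
      obtain ⟨m, hm⟩ := (hex x).mp hπx
      rw [← hxw, ← hm, hNmem m]
      exact m.2
    · right
      apply le_antisymm hPN'
      rintro y ⟨x, hxw⟩
      have hmem3 : π x ∈ Submodule.map π (Submodule.comap w P) := by rw [hJ]; trivial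
      obtain ⟨x', hx'P, hx'π⟩ := hmem3
      have hsub : π (x - x') = 0 := by rw [map_sub, hx'π, sub_self]
      obtain ⟨m, hm⟩ := (hex _).mp hsub
      have hxeq : x = x' + ι m := by rw [hm]; abel
      rw [← hxw, hxeq, map_add, hNmem m]
      exact P.add_mem hx'P (hNP m.2)
  refine ⟨N', lt_of_le_of_ne hNleN' hNneN', ?_, ?_⟩
  · rw [hN'def, LinearMap.range_eq_map]
    exact (Module.finite_def.mp hXfin).map w
  · apply le_antisymm
    swap
    · rw [← hsoc]
      exact inf_le_inf_right _ hNleN'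
    rintro y ⟨hyN', hysoc⟩
    by_cases hyN : y ∈ N
    · rw [← hsoc]
      exact ⟨hyN, hysoc⟩
    exfalso
    set Ry : Submodule R E := R ∙ y with hRydef
    have hdisj : N ⊓ Ry = ⊥ := by
      rw [eq_bot_iff]
      rintro z ⟨hzN, hzR⟩
      obtain ⟨c, rfl⟩ := Submodule.mem_span_singleton.mp hzR
      by_cases hc : c ∈ maximalIdeal R
      · rw [Submodule.mem_bot]
        exact hysoc c hc
      · exfalso
        have hcu : IsUnit c := by
          by_contra hnc
          exact hc ((IsLocalRing.mem_maximalIdeal c).mpr (mem_nonunits_iff.mpr hnc))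
        obtain ⟨u, rfl⟩ := hcu
        apply hyN
        have hy2 : y = ((u⁻¹ : Rˣ) : R) • ((u : R) • y) := by
          rw [smul_smul, Units.inv_mul, one_smul]
        rw [hy2]
        exact N.smul_mem _ hzN
    have hP' : N ⊔ Ry = N' := by
      rcases hbetween (N ⊔ Ry) le_sup_left
          (sup_le hNleN' (by rwa [Submodule.span_singleton_le_iff_mem])) with hcase | hcase
      · exfalso
        apply hyN
        have hy3 : y ∈ N ⊔ Ry := Submodule.mem_sup_right (Submodule.mem_span_singleton_self y)
        rwa [hcase] at hy3
      · exact hcase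
    have hcompl : IsCompl (Submodule.comap N'.subtype N) (Submodule.comap N'.subtype Ry) := by
      constructor
      · rw [disjoint_iff, eq_bot_iff]
        rintro z ⟨hz1, hz2⟩
        have hz3 : (z : E) ∈ N ⊓ Ry := ⟨hz1, hz2⟩
        rw [hdisj, Submodule.mem_bot] at hz3
        rw [Submodule.mem_bot]
        exact Subtype.ext hz3
      · rw [codisjoint_iff, eq_top_iff]
        intro z _
        have hz : (z : E) ∈ N ⊔ Ry := by rw [hP']; exact z.2
        obtain ⟨a, ha, b, hb, hab⟩ := Submodule.mem_sup.mp hz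
        have haN' : a ∈ N' := hNleN' ha
        have hbN' : b ∈ N' := by
          rw [← hP']
          exact Submodule.mem_sup_right hb
        have hzeq : z = ⟨a, haN'⟩ + ⟨b, hbN'⟩ := Subtype.ext (by rw [← hab]; rfl)
        rw [hzeq]
        exact Submodule.add_mem _
          (Submodule.mem_sup_left (show (⟨a, haN'⟩ : ↥N') ∈ Submodule.comap N'.subtype N from ha))
          (Submodule.mem_sup_right
            (show (⟨b, hbN'⟩ : ↥N') ∈ Submodule.comap N'.subtype Ry from hb))
    let eN : ↥(Submodule.comap N'.subtype N) ≃ₗ[R] ↥N := Submodule.comapSubtypeEquivOfLe hNleN'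
    let w' : X →ₗ[R] ↥N' := LinearMap.codRestrict N' w (fun x => ⟨x, rfl⟩)
    let proj := Submodule.linearProjOfIsCompl _ _ hcompl
    refine hnr (eN.toLinearMap ∘ₗ proj ∘ₗ w') ?_
    ext m
    have h1 : w' (ι m) = ⟨(m : E), hNleN' m.2⟩ := Subtype.ext (hNmem m)
    have h2 : (⟨(m : E), hNleN' m.2⟩ : ↥N') ∈ Submodule.comap N'.subtype N := m.2
    have h3 : proj ⟨(m : E), hNleN' m.2⟩ = ⟨⟨(m : E), hNleN' m.2⟩, h2⟩ :=
      Submodule.linearProjOfIsCompl_apply_left hcompl ⟨⟨(m : E), hNleN' m.2⟩, h2⟩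
    have h4 : eN (proj (w' (ι m))) = m := by
      rw [h1, h3]; rfl
    exact congrArg Subtype.val h4

end StepLemma

section ZeroCase

variable {R : Type u} [CommRing R] [IsLocalRing R]

theorem zero_case_false [IsNoetherianRing R] [IsArtinianRing R]
    (hz : ∀ (M : Type u) (_ : AddCommGroup M) (_ : Module R M),
      Module.Finite R M → Module.Injective R M → Subsingleton M) : False := by
  let K := R ⧸ (maximalIdeal R : Submodule R R)
  let Kc : ModuleCat.{u} R := ModuleCat.of R K
  let Ec : ModuleCat.{u} R := CategoryTheory.Injective.under Kc
  let E : Type u := Ec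
  haveI : CategoryTheory.Injective (ModuleCat.of R E) :=
    CategoryTheory.Injective.injective_under Kc
  haveI hEinj : Module.Injective R E := Module.injective_module_of_injective_object R E
  let j : K →ₗ[R] E := (CategoryTheory.Injective.ι Kc).hom
  have hj : Function.Injective j := by
    have hm : CategoryTheory.Mono (CategoryTheory.Injective.ι Kc) := inferInstance
    rwa [ModuleCat.mono_iff_injective] at hm
  let k₀ : Submodule R E := LinearMap.range j
  have hk₀soc : k₀ ≤ socle R E := by
    rintro y ⟨x, rfl⟩ a ha
    have h1 : a • x = 0 := residue_smul_zero ha x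
    rw [← map_smul, h1, map_zero]
  haveI : Nontrivial K :=
    Submodule.Quotient.nontrivial_iff.mpr <| LT.lt.ne <|
      (lt_top_iff_ne_top.mpr (Ideal.IsMaximal.ne_top (IsLocalRing.maximalIdeal.isMaximal R)))
  have hk₀ne : k₀ ≠ ⊥ := by
    obtain ⟨x, hx⟩ := exists_ne (0 : K)
    rw [Submodule.ne_bot_iff]
    exact ⟨j x, ⟨x, rfl⟩, fun h0 => hx (hj (by rw [h0, map_zero]))⟩
  haveI hKfin : Module.Finite R K :=
    Module.Finite.of_surjective (maximalIdeal R : Submodule R R).mkQ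
      (Submodule.Quotient.mk_surjective _)
  have hk₀fg : k₀.FG := by
    show (LinearMap.range j).FG
    rw [LinearMap.range_eq_map]
    exact (Module.finite_def.mp hKfin).map j
  have hk₀inf : k₀ ⊓ socle R E = k₀ := inf_eq_left.mpr hk₀soc
  let T := {N : Submodule R E // N.FG ∧ N ⊓ socle R E = k₀}
  have hstep : ∀ t : T, ∃ t' : T, t.1 < t'.1 := by
    rintro ⟨N, hfg, hsoc⟩
    obtain ⟨N', hlt, hfg', hsoc'⟩ := step_exists hz hEinj k₀ hk₀ne N hfg hsoc
    exact ⟨⟨N', hfg', hsoc'⟩, hlt⟩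
  choose f hf using hstep
  let c : ℕ → T := fun n => Nat.rec ⟨k₀, hk₀fg, hk₀inf⟩ (fun _ t => f t) n
  have hc : ∀ n, (c n).1 < (c (n + 1)).1 := fun n => hf (c n)
  have hmono : Monotone fun n => (c n).1 := monotone_nat_of_le_succ (fun n => (hc n).le)
  let U : Submodule R E := ⨆ n, (c n).1
  have hle_U : ∀ n, (c n).1 ≤ U := fun n => le_iSup (fun n => (c n).1) n
  have hUsoc : U ⊓ socle R E = k₀ := by
    apply le_antisymm
    · rintro y ⟨hyU, hysoc⟩
      have h2 : y ∈ ⨆ n, (⟨fun n => (c n).1, hmono⟩ : ℕ →o Submodule R E) n := hyU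
      rw [Submodule.mem_iSup_of_chain] at h2
      obtain ⟨n, hn⟩ := h2
      rw [← (c n).2.2]
      exact ⟨hn, hysoc⟩
    · exact le_inf (hle_U 0) hk₀soc
  obtain ⟨n0, hn0⟩ := IsArtinianRing.isNilpotent_jacobson_bot (R := R)
  rw [IsLocalRing.jacobson_eq_maximalIdeal ⊥ bot_ne_top] at hn0
  have hn0' : (maximalIdeal R) ^ n0 = ⊥ := hn0
  haveI hk₀noe : IsNoetherian R ↥k₀ := by
    haveI : Module.Finite R ↥k₀ := Module.Finite.iff_fg.mpr hk₀fg
    exact isNoetherian_of_isNoetherianRing_of_finite R ↥k₀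
  have hsocU : IsNoetherian R ↥(socle R ↥U) := by
    let θ : ↥(socle R ↥U) →ₗ[R] ↥k₀ :=
      { toFun := fun x => ⟨((x : ↥U) : E), by
          rw [← hUsoc]
          refine ⟨(x : ↥U).2, ?_⟩
          intro a ha
          have h1 : a • (x : ↥U) = 0 := x.2 a ha
          have h2 : ((a • (x : ↥U) : ↥U) : E) = a • ((x : ↥U) : E) := rfl
          rw [← h2, h1]
          rfl⟩
        map_add' := fun _ _ => Subtype.ext rfl
        map_smul' := fun _ _ => Subtype.ext rfl }
    have hθ : Function.Injective θ := by
      intro a b hab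
      have h5 : ((θ a : ↥k₀) : E) = ((θ b : ↥k₀) : E) := congrArg Subtype.val hab
      have h6 : ((a : ↥U) : E) = ((b : ↥U) : E) := h5
      exact Subtype.ext (Subtype.ext h6)
    exact isNoetherian_of_injective θ hθ
  haveI hUnoe : IsNoetherian R ↥U := isNoetherian_of_socle_noetherian hn0' ↥U hsocU
  let C : ℕ →o Submodule R ↥U :=
    ⟨fun n => Submodule.comap U.subtype (c n).1, fun a b hab => Submodule.comap_mono (hmono hab)⟩
  obtain ⟨n, hn⟩ := monotone_stabilizes_iff_noetherian.mpr hUnoe C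
  have h1 : C n = C (n + 1) := hn (n + 1) (Nat.le_succ n)
  have h3 : ∀ m, Submodule.map U.subtype (Submodule.comap U.subtype (c m).1) = (c m).1 := by
    intro m
    rw [Submodule.map_comap_subtype]
    exact inf_eq_right.mpr (hle_U m)
  have h2 : (c n).1 = (c (n + 1)).1 := by
    rw [← h3 n, ← h3 (n + 1)]
    show Submodule.map U.subtype (C n) = Submodule.map U.subtype (C (n + 1))
    rw [h1]
  exact absurd h2 (ne_of_lt (hc n))

end ZeroCase


section Trichotomy

theorem isArtinianRing_of_maximalIdeal_eq_bot {R : Type u} [CommRing R] [IsLocalRing R]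
    (h : maximalIdeal R = ⊥) : IsArtinianRing R := by
  have hall : ∀ I : Ideal R, I = ⊥ ∨ I = ⊤ := by
    intro I
    by_cases ht : I = ⊤
    · right; exact ht
    · left
      have h2 := IsLocalRing.le_maximalIdeal ht
      rw [h] at h2
      exact le_bot_iff.mp h2
  constructor
  have hb : Acc (· < ·) (⊥ : Ideal R) := ⟨_, fun b hb => absurd hb (by simp)⟩
  constructor
  intro a
  rcases hall a with rfl | rfl
  · exact hb
  · refine ⟨_, fun b hbt => ?_⟩
    rcases hall b with rfl | rfl
    · exact hb
    · exact absurd hbt (lt_irrefl _)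

theorem artinian_of_trivial {R : Type u} [CommRing R] [IsNoetherianRing R] [IsLocalRing R]
    (h : HasOnlyTrivialExtClosedSubcats R) : IsArtinianRing R := by
  haveI finK : Module.Finite R (R ⧸ (maximalIdeal R : Submodule R R)) :=
    Module.Finite.of_surjective (maximalIdeal R : Submodule R R).mkQ
      (Submodule.Quotient.mk_surjective _)
  haveI artK : IsArtinian R (R ⧸ (maximalIdeal R : Submodule R R)) :=
    isArtinian_of_isSimpleModule _
  haveI ntK : Nontrivial (R ⧸ (maximalIdeal R : Submodule R R)) :=
    Submodule.Quotient.nontrivial_iff.mpr <| LT.lt.ne <|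
      (lt_top_iff_ne_top.mpr (Ideal.IsMaximal.ne_top (IsLocalRing.maximalIdeal.isMaximal R)))
  set P : ModulePred R := fun M _ _ => Module.Finite R M ∧ IsArtinian R M with hP
  have hec : IsExtClosedSubcat R P := by
    refine ⟨?_, ?_, ?_, ?_, ?_⟩
    · intro M _ _ hM; exact hM.1
    · intro M N _ _ _ _ hne hM
      obtain ⟨e⟩ := hne
      haveI := hM.1; haveI := hM.2
      exact ⟨Module.Finite.equiv e, isArtinian_of_linearEquiv e⟩
    · exact ⟨PUnit.{u+1}, inferInstance, inferInstance,
        Module.Finite.of_surjective (0 : R →ₗ[R] PUnit.{u+1})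
          (fun x => ⟨0, Subsingleton.elim _ _⟩), inferInstance⟩
    · rintro M N _ _ _ _ hM ⟨ι, π, hπι⟩
      haveI := hM.1; haveI := hM.2
      have hπs : Function.Surjective π := fun n => ⟨ι n, by
        have h3 := LinearMap.congr_fun hπι n; simpa using h3⟩
      exact ⟨Module.Finite.of_surjective π hπs, isArtinian_of_surjective M π hπs⟩
    · intro L M N _ _ _ _ _ _ f g hf hg hex hL hN
      haveI := hL.1; haveI := hL.2; haveI := hN.1; haveI := hN.2
      haveI : IsNoetherian R L := isNoetherian_of_isNoetherianRing_of_finite R L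
      haveI : IsNoetherian R N := isNoetherian_of_isNoetherianRing_of_finite R N
      have hrk : LinearMap.range f = LinearMap.ker g := (LinearMap.exact_iff.mp hex).symm
      haveI : IsNoetherian R M := isNoetherian_of_range_eq_ker f g hrk
      haveI : IsArtinian R M := isArtinian_of_range_eq_ker f g hrk
      exact ⟨Module.finite_def.mpr (IsNoetherian.noetherian ⊤), inferInstance⟩
  rcases h P hec with hzero | haddR | hmodR
  · exfalso
    haveI hsub : Subsingleton (R ⧸ (maximalIdeal R : Submodule R R)) :=
      (hzero _ finK).mp ⟨finK, artK⟩
    exact false_of_nontrivial_of_subsingleton (R ⧸ (maximalIdeal R : Submodule R R))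
  · have hfree : Module.Free R (R ⧸ (maximalIdeal R : Submodule R R)) :=
      (haddR _ finK).mp ⟨finK, artK⟩
    apply isArtinianRing_of_maximalIdeal_eq_bot
    rw [eq_bot_iff]
    intro a ha
    letI := hfree
    let b := Module.Free.chooseBasis R (R ⧸ (maximalIdeal R : Submodule R R))
    obtain ⟨i⟩ := b.index_nonempty
    have h1 : a • b i = 0 := residue_smul_zero ha _
    have h2 := congrArg (fun v => b.repr v i) h1
    simp only [map_smul, b.repr_self, map_zero, Finsupp.coe_zero, Pi.zero_apply,
      Finsupp.coe_smul, Pi.smul_apply, Finsupp.single_eq_same, smul_eq_mul, mul_one] at h2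
    rw [Submodule.mem_bot]
    exact h2
  · exact (hmodR R inferInstance).2

end Trichotomy

/-- If `mod R` has only trivial extension-closed subcategories, then `R` is an Artinian
Gorenstein ring.  (For an Artinian local ring, being Gorenstein — i.e. having finite
injective dimension over itself — is equivalent to `R` being injective as an `R`-module.) -/

theorem stmt_2 (R : Type u) [CommRing R] [IsNoetherianRing R] [IsLocalRing R]
    (h : HasOnlyTrivialExtClosedSubcats R) :
    IsArtinianRing R ∧ Module.Injective R R := by
  haveI hart : IsArtinianRing R := artinian_of_trivial h
  refine ⟨hart, ?_⟩
  set P : ModulePred R := fun M _ _ => Module.Finite R M ∧ Module.Injective R M with hP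
  have hec : IsExtClosedSubcat R P := by
    refine ⟨?_, ?_, ?_, ?_, ?_⟩
    · intro M _ _ hM; exact hM.1
    · intro M N _ _ _ _ hne hM
      obtain ⟨e⟩ := hne
      haveI := hM.1
      exact ⟨Module.Finite.equiv e, injective_of_linearEquiv e hM.2⟩
    · exact ⟨PUnit.{u+1}, inferInstance, inferInstance,
        Module.Finite.of_surjective (0 : R →ₗ[R] PUnit.{u+1})
          (fun x => ⟨0, Subsingleton.elim _ _⟩), injective_punit⟩
    · rintro M N _ _ _ _ hM ⟨ι, π, hπι⟩
      haveI := hM.1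
      have hπs : Function.Surjective π := fun n => ⟨ι n, by
        have h3 := LinearMap.congr_fun hπι n; simpa using h3⟩
      exact ⟨Module.Finite.of_surjective π hπs, injective_of_retract ι π hπι hM.2⟩
    · intro L M N _ _ _ _ _ _ f g hf hg hex hL hN
      haveI := hL.1; haveI := hN.1
      haveI : IsNoetherian R L := isNoetherian_of_isNoetherianRing_of_finite R L
      haveI : IsNoetherian R N := isNoetherian_of_isNoetherianRing_of_finite R N
      have hrk : LinearMap.range f = LinearMap.ker g := (LinearMap.exact_iff.mp hex).symm
      haveI : IsNoetherian R M := isNoetherian_of_range_eq_ker f g hrk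
      exact ⟨Module.finite_def.mpr (IsNoetherian.noetherian ⊤),
        injective_of_extension f g hf hg hex hL.2 hN.2⟩
  rcases h P hec with hzero | haddR | hmodR
  · exact (zero_case_false (R := R) (fun M i1 i2 hfin hinj => by
      letI := i1; letI := i2
      exact (hzero M hfin).mp ⟨hfin, hinj⟩)).elim
  · exact ((haddR R inferInstance).mpr inferInstance).2
  · exact (hmodR R inferInstance).2
end

section
/- Let S → R be a homomorphism of commutative Noetherian local rings. Assume there exist finitely generated R-modules M and N such that M is flat as an S-module but not free as an R-module, and N is not flat as an S-module. Then mod R has a nontrivial extension-closed subcategory. -/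
universe u

open IsLocalRing

section Aux

open LinearMap TensorProduct



theorem myFlat_of_exact {R : Type*} [CommRing R] {A B C : Type*}
    [AddCommGroup A] [Module R A] [AddCommGroup B] [Module R B]
    [AddCommGroup C] [Module R C] (f : A →ₗ[R] B) (g : B →ₗ[R] C)
    (hf : Function.Injective f) (hg : Function.Surjective g)
    (hfg : Function.Exact f g) [Module.Flat R A] [Module.Flat R C] :
    Module.Flat R B := by
  rw [Module.Flat.iff_rTensor_injective']
  intro I
  have hA : Function.Injective (rTensor A I.subtype) :=
    (Module.Flat.iff_rTensor_injective' (R := R) (M := A)).mp ‹_› I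
  have hC : Function.Injective (rTensor C I.subtype) :=
    (Module.Flat.iff_rTensor_injective' (R := R) (M := C)).mp ‹_› I
  have hlid : (TensorProduct.lid R B).toLinearMap ∘ₗ (lTensor R f)
      = f ∘ₗ (TensorProduct.lid R A).toLinearMap := by
    apply TensorProduct.ext'
    intro r a
    simp
  have hinj : Function.Injective (lTensor R f) := by
    have : Function.Injective ((TensorProduct.lid R B).toLinearMap ∘ₗ (lTensor R f)) := by
      rw [hlid]
      exact hf.comp (TensorProduct.lid R A).injective
    exact (Function.Injective.of_comp_iff (TensorProduct.lid R B).injective _).mp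
      (by simpa [LinearMap.coe_comp] using this)
  intro x y hxy
  suffices h : ∀ z, rTensor B I.subtype z = 0 → z = 0 by
    have := h (x - y) (by rw [map_sub, hxy, sub_self])
    exact sub_eq_zero.mp this
  intro z hz
  have h1 : rTensor C I.subtype (lTensor I g z) = 0 := by
    have : rTensor C I.subtype ∘ₗ lTensor I g = lTensor R g ∘ₗ rTensor B I.subtype := by
      rw [rTensor_comp_lTensor, lTensor_comp_rTensor]
    have := DFunLike.congr_fun this z
    simp only [LinearMap.coe_comp, Function.comp_apply] at this
    rw [this, hz, map_zero]
  have h2 : lTensor I g z = 0 := hC (by simpa using h1)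
  have hex : Function.Exact (lTensor (↥I) f) (lTensor (↥I) g) :=
    _root_.lTensor_exact (↥I) hfg hg
  obtain ⟨w, hw⟩ := (hex z).mp h2
  have h3 : lTensor R f (rTensor A I.subtype w) = 0 := by
    have : lTensor R f ∘ₗ rTensor A I.subtype = rTensor B I.subtype ∘ₗ lTensor I f := by
      rw [rTensor_comp_lTensor, lTensor_comp_rTensor]
    have := DFunLike.congr_fun this w
    simp only [LinearMap.coe_comp, Function.comp_apply] at this
    rw [this, hw, hz]
  have h4 : rTensor A I.subtype w = 0 := hinj (by simpa using h3)
  have h5 : w = 0 := hA (by simpa using h4)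
  rw [← hw, h5, map_zero]

/-- Finiteness is closed under extensions. -/
theorem myFinite_of_exact {R : Type*} [Ring R] {A B C : Type*}
    [AddCommGroup A] [Module R A] [AddCommGroup B] [Module R B]
    [AddCommGroup C] [Module R C] (f : A →ₗ[R] B) (g : B →ₗ[R] C)
    (hg : Function.Surjective g) (hfg : Function.Exact f g)
    [Module.Finite R A] [Module.Finite R C] : Module.Finite R B := by
  rw [Module.finite_def]
  apply Submodule.fg_of_fg_map_of_fg_inf_ker g
  · have : Submodule.map g ⊤ = ⊤ := by
      rw [Submodule.map_top, LinearMap.range_eq_top.mpr hg]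
    rw [this]
    exact Module.finite_def.mp ‹_›
  · have hk : (⊤ : Submodule R B) ⊓ LinearMap.ker g = LinearMap.ker g := top_inf_eq _
    rw [hk, hfg.linearMap_ker_eq, ← Submodule.map_top]
    exact (Module.finite_def.mp ‹Module.Finite R A›).map f

theorem myFlat_transfer {S X : Type*} [CommRing S] [AddCommGroup X]
    (m₁ m₂ : Module S X) (h : ∀ (s : S) (x : X), (letI := m₁; s • x) = (letI := m₂; s • x))
    (hf : (letI := m₁; Module.Flat S X)) : (letI := m₂; Module.Flat S X) := by
  cases Module.ext' m₁ m₂ h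
  exact hf

end Aux

/-- Let `S → R` be a homomorphism of Noetherian local rings.  If there are finitely
generated `R`-modules `M` and `N` (regarded as `S`-modules via the homomorphism) such that
`M` is `S`-flat but not `R`-free, and `N` is not `S`-flat, then `mod R` has a nontrivial
extension-closed subcategory. -/
theorem stmt_3 (S : Type u) [CommRing S] [IsNoetherianRing S] [IsLocalRing S]
    (R : Type u) [CommRing R] [IsNoetherianRing R] [IsLocalRing R] (f : S →+* R)
    (M : Type u) [AddCommGroup M] [Module R M] [Module S M]
    (hMs : ∀ (s : S) (m : M), s • m = f s • m)
    [Module.Finite R M] (hMflat : Module.Flat S M) (hMfree : ¬ Module.Free R M)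
    (N : Type u) [AddCommGroup N] [Module R N] [Module S N]
    (hNs : ∀ (s : S) (m : N), s • m = f s • m)
    [Module.Finite R N] (hNflat : ¬ Module.Flat S N) :
    HasNontrivialExtClosedSubcat R := by
  classical
  refine ⟨fun X _ _ => Module.Finite R X ∧
      ∃ (m : Module S X), (∀ (s : S) (x : X), (letI := m; s • x) = f s • x) ∧
        (letI := m; Module.Flat S X), ⟨?_, ?_, ?_, ?_, ?_⟩, ?_, ?_, ?_⟩
  · -- finiteness
    intro X _ _ h
    exact h.1
  · -- closed under isomorphism
    intro X Y _ _ _ _ ⟨e⟩ hX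
    obtain ⟨hfin, m, hsm, hfl⟩ := hX
    letI := m
    refine ⟨Module.Finite.equiv e, Module.compHom Y f, fun s x => rfl, ?_⟩
    letI mY : Module S Y := Module.compHom Y f
    have eS : X ≃ₗ[S] Y :=
      { toFun := e, invFun := e.symm, left_inv := e.left_inv, right_inv := e.right_inv,
        map_add' := e.map_add,
        map_smul' := fun s x => by
          simp only [RingHom.id_apply]
          rw [hsm s x]
          exact e.map_smul (f s) x }
    exact Module.Flat.of_linearEquiv eS.symm
  · -- nonempty
    exact ⟨M, inferInstance, inferInstance, inferInstance,
      ‹Module S M›, hMs, hMflat⟩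
  · -- closed under direct summands
    intro X Y _ _ _ _ hX ⟨ι, π, hπι⟩
    obtain ⟨hfin, m, hsm, hfl⟩ := hX
    letI := m
    have hπ : Function.Surjective π := fun y => ⟨ι y, DFunLike.congr_fun hπι y⟩
    refine ⟨Module.Finite.of_surjective π hπ, Module.compHom Y f, fun s x => rfl, ?_⟩
    letI mY : Module S Y := Module.compHom Y f
    let ιS : Y →ₗ[S] X :=
      { toFun := ι, map_add' := ι.map_add,
        map_smul' := fun s x => by
          simp only [RingHom.id_apply]
          rw [hsm s (ι x)]
          exact ι.map_smul (f s) x }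
    let πS : X →ₗ[S] Y :=
      { toFun := π, map_add' := π.map_add,
        map_smul' := fun s x => by
          simp only [RingHom.id_apply]
          rw [hsm s x]
          exact π.map_smul (f s) x }
    exact Module.Flat.of_retract ιS πS
      (LinearMap.ext fun y => show π (ι y) = y from DFunLike.congr_fun hπι y)
  · -- closed under extensions
    intro L X Y _ _ _ _ _ _ g h hg hh hgh hL hY
    obtain ⟨hfinL, mL, hsmL, hflL⟩ := hL
    obtain ⟨hfinY, mY, hsmY, hflY⟩ := hY
    letI := mL
    letI := mY
    haveI : Module.Finite R X := myFinite_of_exact g h hh hgh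
    refine ⟨‹Module.Finite R X›, Module.compHom X f, fun s x => rfl, ?_⟩
    letI mX : Module S X := Module.compHom X f
    let gS : L →ₗ[S] X :=
      { toFun := g, map_add' := g.map_add,
        map_smul' := fun s x => by
          simp only [RingHom.id_apply]
          rw [hsmL s x]
          exact g.map_smul (f s) x }
    let hS : X →ₗ[S] Y :=
      { toFun := h, map_add' := h.map_add,
        map_smul' := fun s x => by
          simp only [RingHom.id_apply]
          rw [hsmY s (h x)]
          exact h.map_smul (f s) x }
    haveI := hflL
    haveI := hflY
    exact myFlat_of_exact gS hS hg hh hgh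
  · -- not the zero subcategory
    intro h0
    have hsub : Subsingleton M := (h0 M ‹Module.Finite R M›).mp
      ⟨‹Module.Finite R M›, ‹Module S M›, hMs, hMflat⟩
    exact hMfree inferInstance
  · -- not add R
    intro hadd
    exact hMfree ((hadd M ‹Module.Finite R M›).mp
      ⟨‹Module.Finite R M›, ‹Module S M›, hMs, hMflat⟩)
  · -- not all of mod R
    intro hall
    obtain ⟨-, m, hsm, hfl⟩ := hall N ‹Module.Finite R N›
    exact hNflat (myFlat_transfer m _ (fun s x => (hsm s x).trans (hNs s x).symm) hfl)
end

section
/- Suppose there exist a local subring S of R with S ≠ R such that S is not a field, and a proper ideal I of R, such that the composition S → R → R/I of the inclusion with the natural surjection is a ring isomorphism. Then mod R has a nontrivial extension-closed subcategory. -/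
universe u

open IsLocalRing

lemma aux_free_smul_zero {A : Type*} {M : Type*} [CommRing A] [AddCommGroup M] [Module A M]
    [Module.Free A M] [Nontrivial M] {a : A} (h : ∀ m : M, a • m = 0) : a = 0 := by
  let b := Module.Free.chooseBasis A M
  obtain ⟨i⟩ := b.index_nonempty
  have := congrArg (fun m => b.repr m i) (h (b i))
  simpa using this

/-- Suppose there are a proper local subring `S ⊊ R` which is not a field and a proper
ideal `I ⊊ R` such that the composition `S → R → R/I` of the inclusion with the natural
surjection is a ring isomorphism.  Then `mod R` has a nontrivial extension-closed
subcategory. -/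
theorem stmt_4 (R : Type u) [CommRing R] [IsNoetherianRing R] [IsLocalRing R]
    (S : Subring R) (hSne : S ≠ ⊤) [IsNoetherianRing S] [IsLocalRing S]
    (hSfield : ¬ IsField S) (I : Ideal R) (hI : I ≠ ⊤)
    (hiso : Function.Bijective ((Ideal.Quotient.mk I).comp S.subtype)) :
    HasNontrivialExtClosedSubcat R := by
  classical
  set f := (Ideal.Quotient.mk I).comp S.subtype with hf
  let e : S ≃+* R ⧸ I := RingEquiv.ofBijective f hiso
  -- I is nonzero
  have hIne : I ≠ ⊥ := by
    intro h
    apply hSne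
    rw [Subring.eq_top_iff']
    intro r
    obtain ⟨s, hs⟩ := hiso.2 (Ideal.Quotient.mk I r)
    have hs' : Ideal.Quotient.mk I (s : R) = Ideal.Quotient.mk I r := hs
    rw [Ideal.Quotient.eq, h, Ideal.mem_bot, sub_eq_zero] at hs'
    rw [← hs']; exact s.2
  -- S-linear equivalence S ≃ R/I
  have hsmuleq : ∀ (s : S) (m : R ⧸ I), s • m = (s : R) • m := fun s m => by
    rw [← algebraMap_smul R s m]; rfl
  let eL : S ≃ₗ[S] (R ⧸ I) :=
    { toFun := fun s => e s
      invFun := fun x => e.symm x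
      left_inv := e.left_inv
      right_inv := e.right_inv
      map_add' := by intro x y; exact map_add e x y
      map_smul' := by
        intro s t
        show Ideal.Quotient.mk I ((s * t : S) : R) = s • Ideal.Quotient.mk I (t : R)
        rw [hsmuleq]
        push_cast
        rw [map_mul]
        rw [← Ideal.Quotient.algebraMap_eq, ← Algebra.smul_def] }
  have hFinR : Module.Finite R (R ⧸ I) := inferInstance
  have hFinS : Module.Finite S (R ⧸ I) := Module.Finite.equiv eL
  have hFreeS : Module.Free S (R ⧸ I) := Module.Free.of_equiv eL
  haveI := hFinR; haveI := hFinS; haveI := hFreeS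
  have hnontriv : Nontrivial (R ⧸ I) := Ideal.Quotient.nontrivial_iff.mpr hI
  haveI := hnontriv
  -- elements of an ideal kill the quotient
  have hsmul : ∀ (J : Ideal R) (x : R), x ∈ J → ∀ m : R ⧸ J, x • m = 0 := by
    intro J x hx m
    obtain ⟨r, rfl⟩ := Submodule.Quotient.mk_surjective J m
    rw [← Submodule.Quotient.mk_smul]
    exact (Submodule.Quotient.mk_eq_zero J).mpr
      (by rw [smul_eq_mul]; exact Ideal.mul_mem_right r J hx)
  refine ⟨fun M [AddCommGroup M] [Module R M] =>
      Module.Finite R M ∧ Module.Finite S M ∧ Module.Free S M,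
    ⟨fun M _ _ h => h.1, ?_, ⟨R ⧸ I, inferInstance, inferInstance, hFinR, hFinS, hFreeS⟩,
      ?_, ?_⟩, ?_, ?_, ?_⟩
  · -- closed under isomorphism
    intro M N _ _ _ _ hMN hM
    obtain ⟨g⟩ := hMN
    obtain ⟨h1, h2, h3⟩ := hM
    haveI := h1; haveI := h2; haveI := h3
    exact ⟨Module.Finite.equiv g, Module.Finite.equiv (g.restrictScalars S),
      Module.Free.of_equiv (g.restrictScalars S)⟩
  · -- closed under direct summands
    intro M N _ _ _ _ hM hsplit
    obtain ⟨h1, h2, h3⟩ := hM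
    haveI := h1; haveI := h2; haveI := h3
    obtain ⟨ι, π, hπι⟩ := hsplit
    have hπ : Function.Surjective π := fun n =>
      ⟨ι n, by rw [← LinearMap.comp_apply, hπι]; rfl⟩
    have hfRN : Module.Finite R N := Module.Finite.of_surjective π hπ
    have hfSN : Module.Finite S N :=
      Module.Finite.of_surjective (π.restrictScalars S) hπ
    haveI := hfSN
    haveI : Module.Projective S N :=
      Module.Projective.of_split (ι.restrictScalars S) (π.restrictScalars S)
        (LinearMap.ext fun x => DFunLike.congr_fun hπι x)
    haveI : Module.FinitePresentation S N := Module.finitePresentation_of_projective S N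
    exact ⟨hfRN, hfSN, Module.free_of_flat_of_isLocalRing⟩
  · -- closed under extensions
    intro L M N _ _ _ _ _ _ g1 g2 hinj hsurj hexact hL hN
    obtain ⟨hL1, hL2, hL3⟩ := hL; obtain ⟨hN1, hN2, hN3⟩ := hN
    haveI := hL1; haveI := hL2; haveI := hL3
    haveI := hN1; haveI := hN2; haveI := hN3
    obtain ⟨σ, hσ⟩ := Module.projective_lifting_property (g2.restrictScalars S)
      (LinearMap.id) hsurj
    have hex : Function.Exact ⇑(g1.restrictScalars S) ⇑(g2.restrictScalars S) := hexact
    obtain ⟨eqv, -⟩ := hex.splitSurjectiveEquiv hinj ⟨σ, hσ⟩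
    have hMS : Module.Finite S M := Module.Finite.equiv eqv.symm
    have hMfree : Module.Free S M := Module.Free.of_equiv eqv.symm
    haveI := hMS
    exact ⟨Module.Finite.of_restrictScalars_finite S R M, hMS, hMfree⟩
  · -- not the zero subcategory
    intro h
    have := (h (R ⧸ I) hFinR).mp ⟨hFinR, hFinS, hFreeS⟩
    exact (not_subsingleton (R ⧸ I)) this
  · -- not add R
    intro h
    have hfree : Module.Free R (R ⧸ I) := (h (R ⧸ I) hFinR).mp ⟨hFinR, hFinS, hFreeS⟩
    haveI := hfree
    obtain ⟨a, haI, hane⟩ := (Submodule.ne_bot_iff I).mp hIne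
    exact hane (aux_free_smul_zero (fun m => hsmul I a haI m))
  · -- not all of mod R
    intro h
    have h1 : maximalIdeal S ≠ ⊥ := fun hb =>
      hSfield (isField_iff_maximalIdeal_eq.mpr hb)
    obtain ⟨s, hsmem, hsne⟩ := (Submodule.ne_bot_iff _).mp h1
    have hsR : (s : R) ∈ maximalIdeal R := by
      by_contra hs
      have hu : IsUnit (s : R) := by
        rwa [mem_maximalIdeal, mem_nonunits_iff, not_not] at hs
      have h2 : IsUnit (e s) := hu.map (Ideal.Quotient.mk I)
      have h3 : IsUnit s := by
        have := h2.map e.symm.toRingHom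
        rwa [show e.symm.toRingHom (e s) = s from e.symm_apply_apply s] at this
      rw [mem_maximalIdeal, mem_nonunits_iff] at hsmem
      exact hsmem h3
    have hkfin : Module.Finite R (R ⧸ maximalIdeal R) := inferInstance
    obtain ⟨-, -, hfree⟩ := h (R ⧸ maximalIdeal R) hkfin
    haveI := hfree
    haveI : Nontrivial (R ⧸ maximalIdeal R) :=
      Ideal.Quotient.nontrivial_iff.mpr (Ideal.IsMaximal.ne_top inferInstance)
    have hz : ∀ m : R ⧸ maximalIdeal R, s • m = 0 := fun m => by
      rw [← algebraMap_smul R s m]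
      exact hsmul _ _ hsR m
    exact hsne (aux_free_smul_zero hz)
end

section
/- Let S be a commutative Noetherian local ring which is not a field, and let N be a nonzero finitely generated S-module. Let R = S ⋉ N be the idealization (trivial square-zero extension) of N over S. Then mod R has a nontrivial extension-closed subcategory. -/
universe u

open IsLocalRing

section ExtHelpers

/-- Over any ring, a nonzero free nontrivial module is faithful. -/
theorem aux_smul_faithful {A M : Type*} [CommRing A] [AddCommGroup M] [Module A M]
    [Module.Free A M] [Nontrivial M] {r : A} (h : ∀ x : M, r • x = 0) : r = 0 := by
  let b := Module.Free.chooseBasis A M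
  obtain ⟨i⟩ := b.index_nonempty
  have := congrArg (fun y => b.repr y i) (h (b i))
  simpa using this

theorem aux_free_of_exact {A L M P : Type*} [CommRing A] [AddCommGroup L] [Module A L]
    [AddCommGroup M] [Module A M] [AddCommGroup P] [Module A P]
    (f : L →ₗ[A] M) (g : M →ₗ[A] P) (hf : Function.Injective f)
    (hg : Function.Surjective g) (h : Function.Exact f g)
    [Module.Free A L] [Module.Free A P] : Module.Free A M := by
  obtain ⟨l, hl⟩ := Module.projective_lifting_property g LinearMap.id hg
  obtain ⟨e, -⟩ := h.splitSurjectiveEquiv hf ⟨l, hl⟩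
  exact Module.Free.of_equiv e.symm

theorem aux_finite_of_exact {A L M P : Type*} [CommRing A] [AddCommGroup L] [Module A L]
    [AddCommGroup M] [Module A M] [AddCommGroup P] [Module A P]
    (f : L →ₗ[A] M) (g : M →ₗ[A] P)
    (hg : Function.Surjective g) (h : Function.Exact f g)
    (hL : Module.Finite A L) (hP : Module.Finite A P) : Module.Finite A M := by
  constructor
  apply Submodule.fg_of_fg_map_of_fg_inf_ker g
  · rw [Submodule.map_top, LinearMap.range_eq_top.mpr hg]
    exact hP.fg_top
  · rw [top_inf_eq, LinearMap.exact_iff.mp h, LinearMap.range_eq_map]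
    exact Submodule.FG.map f hL.fg_top

attribute [local instance] RestrictScalars.moduleOrig

variable (S : Type u) [CommRing S] [IsNoetherianRing S] [IsLocalRing S]
    (N : Type u) [AddCommGroup N] [Module S N] [Module Sᵐᵒᵖ N]
    [IsCentralScalar S N] [Module.Finite S N]

local notation "R'" => TrivSqZeroExt S N

local instance aux_finiteSR : Module.Finite S R' :=
  Module.Finite.equiv (LinearEquiv.refl S (S × N) : (S × N) ≃ₗ[S] TrivSqZeroExt S N)

theorem aux_finiteS_restrict (M : Type u) [AddCommGroup M] [Module R' M]
    [hM : Module.Finite R' M] : Module.Finite S (RestrictScalars S R' M) := by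
  haveI : Module.Finite R' (RestrictScalars S R' M) := hM
  exact Module.Finite.trans R' (RestrictScalars S R' M)

theorem aux_free_congr (M M' : Type u) [AddCommGroup M] [Module R' M]
    [AddCommGroup M'] [Module R' M'] (e : M ≃ₗ[R'] M')
    [Module.Free S (RestrictScalars S R' M)] : Module.Free S (RestrictScalars S R' M') := by
  have eS : RestrictScalars S R' M ≃ₗ[S] RestrictScalars S R' M' :=
    LinearEquiv.restrictScalars S (show RestrictScalars S R' M ≃ₗ[R'] RestrictScalars S R' M' from e)
  exact Module.Free.of_equiv eS

theorem aux_free_retract (M M' : Type u) [AddCommGroup M] [Module R' M]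
    [AddCommGroup M'] [Module R' M'] [Module.Free S (RestrictScalars S R' M)]
    [Module.Finite R' M'] (ι : M' →ₗ[R'] M) (π : M →ₗ[R'] M')
    (hpi : π ∘ₗ ι = LinearMap.id) : Module.Free S (RestrictScalars S R' M') := by
  haveI : Module.Projective S (RestrictScalars S R' M') := by
    refine Module.Projective.of_split
      (LinearMap.restrictScalars S (show RestrictScalars S R' M' →ₗ[R'] RestrictScalars S R' M from ι))
      (LinearMap.restrictScalars S (show RestrictScalars S R' M →ₗ[R'] RestrictScalars S R' M' from π))
      ?_
    ext x
    exact LinearMap.congr_fun hpi x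
  haveI : Module.Finite S (RestrictScalars S R' M') := aux_finiteS_restrict S N M'
  letI : Module S M' := Module.compHom M' (algebraMap S R')
  have eM' : RestrictScalars S R' M' ≃ₗ[S] M' :=
    { toFun := fun x => x, invFun := fun x => x, left_inv := fun _ => rfl,
      right_inv := fun _ => rfl, map_add' := fun _ _ => rfl, map_smul' := fun _ _ => rfl }
  haveI : Module.Finite S M' := Module.Finite.equiv eM'
  haveI : Module.Projective S M' := Module.Projective.of_equiv eM'
  haveI : Module.FinitePresentation S M' :=
    Module.finitePresentation_of_finite _ _
  haveI : Module.Free S M' := Module.free_of_flat_of_isLocalRing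
  exact Module.Free.of_equiv eM'.symm

theorem aux_free_ext (L M M' : Type u) [AddCommGroup L] [Module R' L]
    [AddCommGroup M] [Module R' M] [AddCommGroup M'] [Module R' M']
    (f : L →ₗ[R'] M) (g : M →ₗ[R'] M') (hf : Function.Injective f)
    (hg : Function.Surjective g) (hex : Function.Exact f g)
    [Module.Free S (RestrictScalars S R' L)] [Module.Free S (RestrictScalars S R' M')] :
    Module.Free S (RestrictScalars S R' M) := by
  have fS : RestrictScalars S R' L →ₗ[S] RestrictScalars S R' M :=
    LinearMap.restrictScalars S (show RestrictScalars S R' L →ₗ[R'] RestrictScalars S R' M from f)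
  have gS : RestrictScalars S R' M →ₗ[S] RestrictScalars S R' M' :=
    LinearMap.restrictScalars S (show RestrictScalars S R' M →ₗ[R'] RestrictScalars S R' M' from g)
  letI : Module S L := Module.compHom L (algebraMap S R')
  letI : Module S M := Module.compHom M (algebraMap S R')
  letI : Module S M' := Module.compHom M' (algebraMap S R')
  have eL : RestrictScalars S R' L ≃ₗ[S] L :=
    { toFun := fun x => x, invFun := fun x => x, left_inv := fun _ => rfl,
      right_inv := fun _ => rfl, map_add' := fun _ _ => rfl, map_smul' := fun _ _ => rfl }
  have eM : RestrictScalars S R' M ≃ₗ[S] M :=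
    { toFun := fun x => x, invFun := fun x => x, left_inv := fun _ => rfl,
      right_inv := fun _ => rfl, map_add' := fun _ _ => rfl, map_smul' := fun _ _ => rfl }
  have eM' : RestrictScalars S R' M' ≃ₗ[S] M' :=
    { toFun := fun x => x, invFun := fun x => x, left_inv := fun _ => rfl,
      right_inv := fun _ => rfl, map_add' := fun _ _ => rfl, map_smul' := fun _ _ => rfl }
  haveI : Module.Free S L := Module.Free.of_equiv eL
  haveI : Module.Free S M' := Module.Free.of_equiv eM'
  haveI : Module.Free S M := aux_free_of_exact
    ({ toFun := f, map_add' := f.map_add,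
       map_smul' := fun s x => f.map_smul (algebraMap S R' s) x } : L →ₗ[S] M)
    ({ toFun := g, map_add' := g.map_add,
       map_smul' := fun s x => g.map_smul (algebraMap S R' s) x } : M →ₗ[S] M')
    hf hg hex
  exact Module.Free.of_equiv eM.symm

section ViaFst

variable (K : Type u) [AddCommGroup K] [Module S K]

/-- `K` (an `S`-module) as an `R' = S ⋉ N`-module via the projection. -/
noncomputable def auxModViaFst : Module R' K :=
  Module.compHom K (TrivSqZeroExt.fstHom S S N).toRingHom

attribute [local instance] auxModViaFst

theorem aux_fst_smul (r : R') (x : K) : r • x = (TrivSqZeroExt.fst r) • x := rfl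

local instance : IsScalarTower S R' K :=
  ⟨fun s r x => by
    show (TrivSqZeroExt.fst (s • r)) • x = s • (TrivSqZeroExt.fst r) • x
    rw [TrivSqZeroExt.fst_smul, smul_eq_mul, mul_smul]⟩

/-- restricting back gives the original module. -/
noncomputable def auxRsEquiv : RestrictScalars S R' K ≃ₗ[S] K where
  toFun x := x
  invFun x := x
  left_inv _ := rfl
  right_inv _ := rfl
  map_add' _ _ := rfl
  map_smul' _ _ := rfl

theorem aux_finite_over_R' [Module.Finite S K] : Module.Finite R' K := by
  obtain ⟨s, hs⟩ := ‹Module.Finite S K›.fg_top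
  refine ⟨⟨s, ?_⟩⟩
  have h2 := Submodule.span_le_restrictScalars S R' (s : Set K)
  rw [hs, top_le_iff, Submodule.restrictScalars_eq_top_iff] at h2
  rw [h2]

end ViaFst

end ExtHelpers

/-- Let `S` be a Noetherian local ring which is not a field and `N` a nonzero finitely
generated `S`-module.  Then `mod R`, where `R = S ⋉ N` is the idealization (trivial
square-zero extension) of `N` over `S`, has a nontrivial extension-closed subcategory. -/
theorem stmt_5 (S : Type u) [CommRing S] [IsNoetherianRing S] [IsLocalRing S]
    (hS : ¬ IsField S) (N : Type u) [AddCommGroup N] [Module S N] [Module Sᵐᵒᵖ N]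
    [IsCentralScalar S N] [Module.Finite S N] (hN : Nontrivial N) :
    HasNontrivialExtClosedSubcat (TrivSqZeroExt S N) := by
  classical
  letI RR := TrivSqZeroExt S N
  refine ⟨fun M _ _ => Module.Finite (TrivSqZeroExt S N) M ∧
      Module.Free S (RestrictScalars S (TrivSqZeroExt S N) M), ?_, ?_, ?_, ?_⟩
  · -- extension-closed subcategory
    refine ⟨fun M _ _ h => h.1, ?_, ?_, ?_, ?_⟩
    · -- iso-closed
      intro M M' _ _ _ _ ⟨e⟩ ⟨h1, h2⟩
      haveI := h1; haveI := h2
      exact ⟨Module.Finite.equiv e, aux_free_congr S N M M' e⟩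
    · -- nonempty : `S` itself via the projection
      letI : Module (TrivSqZeroExt S N) S := auxModViaFst S N S
      refine ⟨S, inferInstance, inferInstance, aux_finite_over_R' S N S, ?_⟩
      exact Module.Free.of_equiv (auxRsEquiv S N S).symm
    · -- summands
      intro M M' _ _ _ _ ⟨h1, h2⟩ ⟨ι, π, hpi⟩
      haveI := h1; haveI := h2
      have hσ : Function.Surjective π :=
        Function.RightInverse.surjective (g := ι) (fun x => LinearMap.congr_fun hpi x)
      haveI hfin := Module.Finite.of_surjective π hσ
      exact ⟨hfin, aux_free_retract S N M M' ι π hpi⟩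
    · -- extensions
      intro L M M' _ _ _ _ _ _ f g hf hg hex ⟨hL1, hL2⟩ ⟨hM1, hM2⟩
      haveI := hL2; haveI := hM2
      exact ⟨aux_finite_of_exact f g hg hex hL1 hM1,
        aux_free_ext S N L M M' f g hf hg hex⟩
  · -- not the zero subcategory : `S` is in it
    intro h
    letI : Module (TrivSqZeroExt S N) S := auxModViaFst S N S
    have hfin := aux_finite_over_R' S N S
    have hP : Module.Finite (TrivSqZeroExt S N) S ∧
        Module.Free S (RestrictScalars S (TrivSqZeroExt S N) S) :=
      ⟨hfin, Module.Free.of_equiv (auxRsEquiv S N S).symm⟩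
    exact not_subsingleton S ((h S hfin).mp hP)
  · -- not `add R` : `S` is in it but is not `R`-free
    intro h
    letI : Module (TrivSqZeroExt S N) S := auxModViaFst S N S
    have hfin := aux_finite_over_R' S N S
    have hP : Module.Finite (TrivSqZeroExt S N) S ∧
        Module.Free S (RestrictScalars S (TrivSqZeroExt S N) S) :=
      ⟨hfin, Module.Free.of_equiv (auxRsEquiv S N S).symm⟩
    haveI hfree : Module.Free (TrivSqZeroExt S N) S := (h S hfin).mp hP
    obtain ⟨n, hn⟩ := exists_ne (0 : N)
    have hz : (TrivSqZeroExt.inr n : TrivSqZeroExt S N) = 0 := by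
      apply aux_smul_faithful (A := TrivSqZeroExt S N) (M := S)
      intro x
      rw [aux_fst_smul, TrivSqZeroExt.fst_inr, zero_smul]
    exact hn (TrivSqZeroExt.inr_injective (by simpa using hz))
  · -- not all of `mod R` : the residue field is not in it
    intro h
    haveI : Nontrivial (S ⧸ maximalIdeal S) :=
      Ideal.Quotient.nontrivial_iff.mpr (maximalIdeal.isMaximal S).ne_top
    letI : Module (TrivSqZeroExt S N) (S ⧸ maximalIdeal S) :=
      auxModViaFst S N (S ⧸ maximalIdeal S)
    have hfin := aux_finite_over_R' S N (S ⧸ maximalIdeal S)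
    obtain ⟨-, hPfree⟩ := h (S ⧸ maximalIdeal S) hfin
    haveI := hPfree
    haveI : Module.Free S (S ⧸ maximalIdeal S) :=
      Module.Free.of_equiv (auxRsEquiv S N (S ⧸ maximalIdeal S))
    have hbot : maximalIdeal S ≠ ⊥ := fun hb =>
      hS (IsLocalRing.isField_iff_maximalIdeal_eq.mpr hb)
    obtain ⟨x, hxm, hx0⟩ := Submodule.exists_mem_ne_zero_of_ne_bot hbot
    refine hx0 (aux_smul_faithful (A := S) (M := S ⧸ maximalIdeal S) fun y => ?_)
    obtain ⟨s, rfl⟩ := Submodule.Quotient.mk_surjective _ y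
    rw [← Submodule.Quotient.mk_smul, Submodule.Quotient.mk_eq_zero]
    exact Ideal.mul_mem_right s _ hxm
end
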